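/- arXiv:1210.4328 — 8 statements merged into one kernel-verified Lean document; each statement's English description precedes it below -/
import Mathlib

section
/- Let G be a group, h ∈ G, and K a normal subgroup of G of finite index. If the conjugacy class h^K = {k⁻¹hk : k ∈ K} is separable (closed in the profinite topology) in G, then there exists a finite index normal subgroup L of G with L ≤ K such that, denoting by ψ : G → G/L the natural epimorphism, the centralizer of ψ(h) in G/L is contained in ψ(C_G(h)·K). -/
open Pointwise

/-- The profinite topology on a group: generated by cosets of finite-index normal subgroups. -/
def profiniteTopology (G : Type*) [Group G] : TopologicalSpace G :=
  TopologicalSpace.generateFrom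
    {C | ∃ N : Subgroup G, N.Normal ∧ N.FiniteIndex ∧ ∃ g : G, C = {x | ∃ n ∈ N, x = g * n}}

/-- `S` is separable in `G` if it is closed in the profinite topology of `G`. -/
def SeparableIn {G : Type*} [Group G] (S : Set G) : Prop :=
  @IsClosed G (profiniteTopology G) S

lemma open_key {G : Type*} [Group G] {U : Set G}
    (hU : TopologicalSpace.GenerateOpen
      {C | ∃ N : Subgroup G, N.Normal ∧ N.FiniteIndex ∧ ∃ g : G, C = {x | ∃ n ∈ N, x = g * n}} U) :
    ∀ x ∈ U, ∃ N : Subgroup G, N.Normal ∧ N.FiniteIndex ∧ ∀ n ∈ N, x * n ∈ U := by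
  induction hU with
  | basic C hC =>
    obtain ⟨N, hNn, hNfi, g, rfl⟩ := hC
    rintro x ⟨m, hm, rfl⟩
    exact ⟨N, hNn, hNfi, fun n hn => ⟨m * n, N.mul_mem hm hn, mul_assoc _ _ _⟩⟩
  | univ =>
    intro x _
    exact ⟨⊤, inferInstance, inferInstance, fun _ _ => trivial⟩
  | inter U V _ _ ihU ihV =>
    rintro x ⟨hxU, hxV⟩
    obtain ⟨N₁, hN₁n, hN₁fi, h₁⟩ := ihU x hxU
    obtain ⟨N₂, hN₂n, hN₂fi, h₂⟩ := ihV x hxV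
    haveI := hN₁fi; haveI := hN₂fi; haveI := hN₁n; haveI := hN₂n
    exact ⟨N₁ ⊓ N₂, inferInstance, inferInstance,
      fun n hn => ⟨h₁ n hn.1, h₂ n hn.2⟩⟩
  | sUnion 𝒮 _ ih =>
    rintro x ⟨t, ht, hxt⟩
    obtain ⟨N, hNn, hNfi, hN⟩ := ih t ht x hxt
    exact ⟨N, hNn, hNfi, fun n hn => ⟨t, ht, hN n hn⟩⟩

/-- If the conjugacy class `h^K` is separable in `G` (with `K` normal of finite index),
then there is a finite index normal subgroup `L ≤ K` of `G` such that the centralizer of the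
image of `h` in `G/L` is contained in the image of `C_G(h) · K`. -/
theorem stmt_1 {G : Type*} [Group G] (h : G) (K : Subgroup G) (hKn : K.Normal)
    (hKfi : K.FiniteIndex)
    (hsep : SeparableIn {x : G | ∃ k ∈ K, k⁻¹ * h * k = x}) :
    ∃ (L : Subgroup G) (hLn : L.Normal), L.FiniteIndex ∧ L ≤ K ∧
      ((Subgroup.centralizer {(@QuotientGroup.mk' G _ L hLn) h} : Set (G ⧸ L)) ⊆
        (@QuotientGroup.mk' G _ L hLn) ''
          ((Subgroup.centralizer {h} : Set G) * (K : Set G))) := by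
  classical
  set S : Set G := {x : G | ∃ k ∈ K, k⁻¹ * h * k = x} with hS
  have key : ∀ x : G, x ∉ S → ∃ N : Subgroup G, N.Normal ∧ N.FiniteIndex ∧
      ∀ n ∈ N, x * n ∉ S := by
    intro x hx
    have hopen : TopologicalSpace.GenerateOpen
        {C | ∃ N : Subgroup G, N.Normal ∧ N.FiniteIndex ∧ ∃ g : G, C = {x | ∃ n ∈ N, x = g * n}}
        Sᶜ := hsep.isOpen_compl
    exact open_key hopen x hx
  -- choose for each coset of K a subgroup
  haveI : Finite (G ⧸ K) := K.finite_quotient_of_finiteIndex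
  have Nch : ∀ q : G ⧸ K, ∃ N : Subgroup G, N.Normal ∧ N.FiniteIndex ∧
      ((q.out⁻¹ * h * q.out ∉ S) → ∀ n ∈ N, q.out⁻¹ * h * q.out * n ∉ S) := by
    intro q
    by_cases hq : q.out⁻¹ * h * q.out ∉ S
    · obtain ⟨N, hNn, hNfi, hN⟩ := key _ hq
      exact ⟨N, hNn, hNfi, fun _ => hN⟩
    · exact ⟨⊤, inferInstance, inferInstance, fun hq' => absurd hq' hq⟩
  choose N hNn hNfi hNdis using Nch
  set L : Subgroup G := K ⊓ ⨅ q : G ⧸ K, N q with hL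
  have hLn : L.Normal := by
    constructor
    intro n hn g
    refine ⟨hKn.conj_mem n hn.1 g, ?_⟩
    have h2 := Subgroup.mem_iInf.mp hn.2
    exact Subgroup.mem_iInf.mpr fun q => (hNn q).conj_mem n (h2 q) g
  have hLfi : L.FiniteIndex := by
    haveI := hKfi
    haveI : (⨅ q : G ⧸ K, N q).FiniteIndex := Subgroup.finiteIndex_iInf hNfi
    exact inferInstance
  have hLK : L ≤ K := inf_le_left
  refine ⟨L, hLn, hLfi, hLK, ?_⟩
  rintro x hx
  obtain ⟨g, rfl⟩ := QuotientGroup.mk'_surjective L x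
  have hcomm : h⁻¹ * g⁻¹ * h * g ∈ L := by
    rw [SetLike.mem_coe, Subgroup.mem_centralizer_singleton_iff] at hx
    have : (QuotientGroup.mk' L) (h * g) = (QuotientGroup.mk' L) (g * h) := by
      simpa [map_mul] using hx.symm
    have h3 := (QuotientGroup.eq (s := L) (a := h * g) (b := g * h)).mp (by simpa using this)
    have h4 := L.inv_mem h3
    simpa [mul_assoc, mul_inv_rev] using h4
  -- show g ∈ C_G(h) * K
  have hg : g ∈ (Subgroup.centralizer {h} : Set G) * (K : Set G) := by
    by_contra hgc
    set q : G ⧸ K := QuotientGroup.mk g with hq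
    have hout : q.out⁻¹ * g ∈ K := by
      have : (QuotientGroup.mk q.out : G ⧸ K) = QuotientGroup.mk g := by
        rw [hq]; exact Quotient.out_eq _
      exact (QuotientGroup.eq (s := K)).mp this
    set k₀ : G := q.out⁻¹ * g with hk₀
    have hgeq : g = q.out * k₀ := by rw [hk₀]; group
    -- q.out ∉ C * K
    have houtc : q.out⁻¹ * h * q.out ∉ S := by
      rintro ⟨k, hk, hkk⟩
      apply hgc
      refine ⟨q.out * k⁻¹, ?_, k * k₀, K.mul_mem hk hout, by rw [hgeq]; group⟩
      rw [SetLike.mem_coe, Subgroup.mem_centralizer_singleton_iff]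
      have : k⁻¹ * h * k = q.out⁻¹ * h * q.out := hkk
      -- h * (out * k⁻¹) = (out * k⁻¹) * h
      have h2 : h * q.out = q.out * (k⁻¹ * h * k) := by
        rw [this]; group
      calc q.out * k⁻¹ * h = q.out * (k⁻¹ * h * k) * k⁻¹ := by group
        _ = h * q.out * k⁻¹ := by rw [← h2]
        _ = h * (q.out * k⁻¹) := by group
    -- l := h⁻¹ * g⁻¹ * h * g ∈ L, and g⁻¹ h g = h * l
    set l : G := h⁻¹ * g⁻¹ * h * g with hl
    have hlL : l ∈ L := hcomm
    have hconj : g⁻¹ * h * g = h * l := by rw [hl]; group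
    -- q.out⁻¹ h q.out * (k₀ l⁻¹ k₀⁻¹) = k₀ h k₀⁻¹ ∈ S
    have hn : k₀ * l⁻¹ * k₀⁻¹ ∈ N q := by
      have hm : k₀ * l⁻¹ * k₀⁻¹ ∈ L := hLn.conj_mem l⁻¹ (L.inv_mem hlL) k₀
      exact Subgroup.mem_iInf.mp (Subgroup.mem_inf.mp hm).2 q
    have heq : q.out⁻¹ * h * q.out * (k₀ * l⁻¹ * k₀⁻¹) = k₀⁻¹⁻¹ * h * k₀⁻¹ := by
      have h1 : q.out⁻¹ * h * q.out = k₀ * (g⁻¹ * h * g) * k₀⁻¹ := by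
        rw [hgeq]; group
      rw [h1, hconj]; group
    exact hNdis q houtc _ hn ⟨k₀⁻¹, K.inv_mem hout, heq.symm⟩
  exact ⟨g, hg, rfl⟩
end

section
/- Let H be a normal subgroup of finite index m in a group G, and let x ∈ G. Suppose H is hereditarily conjugacy separable, the centralizer C_G(x^m) is conjugacy separable, and every finite index subgroup of C_G(x^m) is separable in G. Then the conjugacy class x^G is separable in G. -/
/-- The conjugacy class of `x`. -/
def ConjClass {G : Type*} [Group G] (x : G) : Set G := {y | ∃ g : G, g⁻¹ * x * g = y}

/-- A group is conjugacy separable if every conjugacy class is closed in the profinite topology. -/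
def ConjugacySeparable (G : Type*) [Group G] : Prop :=
  ∀ x : G, SeparableIn (ConjClass x)

/-- A group is hereditarily conjugacy separable if every finite index subgroup is
conjugacy separable. -/
def HereditarilyConjugacySeparable (G : Type*) [Group G] : Prop :=
  ∀ K : Subgroup G, K.FiniteIndex → ConjugacySeparable K

section Aux
open Pointwise
variable {G : Type*} [Group G]

def cosetSet (g : G) (M : Subgroup G) : Set G := {x | ∃ n ∈ M, x = g * n}

lemma mem_cosetSet {g x : G} {M : Subgroup G} : x ∈ cosetSet g M ↔ g⁻¹ * x ∈ M := by
  constructor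
  · rintro ⟨n, hn, rfl⟩; simpa using hn
  · intro h; exact ⟨g⁻¹ * x, h, by group⟩

lemma self_mem_cosetSet (g : G) (M : Subgroup G) : g ∈ cosetSet g M :=
  mem_cosetSet.2 (by simpa using M.one_mem)

lemma cosetSet_isOpen {g : G} {M : Subgroup G} (hn : M.Normal) (hf : M.FiniteIndex) :
    @IsOpen G (profiniteTopology G) (cosetSet g M) :=
  TopologicalSpace.GenerateOpen.basic _ ⟨M, hn, hf, g, rfl⟩

lemma exists_coset_subset {U : Set G} (hU : @IsOpen G (profiniteTopology G) U) :
    ∀ y ∈ U, ∃ M : Subgroup G, M.Normal ∧ M.FiniteIndex ∧ cosetSet y M ⊆ U := by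
  induction hU with
  | basic V hV =>
      rintro y hy
      obtain ⟨N, hn, hf, g, rfl⟩ := hV
      refine ⟨N, hn, hf, ?_⟩
      intro u hu
      rw [mem_cosetSet] at hu
      have hy' : g⁻¹ * y ∈ N := mem_cosetSet.1 hy
      have : g⁻¹ * u ∈ N := by
        have := N.mul_mem hy' hu
        simpa [mul_assoc] using this
      exact mem_cosetSet.2 this
  | univ => intro y _; exact ⟨⊤, inferInstance, inferInstance, by simp⟩
  | inter U V _ _ ihU ihV =>
      rintro y ⟨hyU, hyV⟩
      obtain ⟨M1, h1n, h1f, h1⟩ := ihU y hyU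
      obtain ⟨M2, h2n, h2f, h2⟩ := ihV y hyV
      refine ⟨M1 ⊓ M2, ⟨fun n hn g => ⟨h1n.conj_mem _ hn.1 g, h2n.conj_mem _ hn.2 g⟩⟩, inferInstance, ?_⟩
      intro u hu
      rw [mem_cosetSet] at hu
      exact ⟨h1 (mem_cosetSet.2 hu.1), h2 (mem_cosetSet.2 hu.2)⟩
  | sUnion S _ ih =>
      rintro y ⟨V, hV, hyV⟩
      obtain ⟨M, hn, hf, h⟩ := ih V hV y hyV
      exact ⟨M, hn, hf, h.trans (Set.subset_sUnion_of_mem hV)⟩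

lemma separableIn_iff (S : Set G) :
    SeparableIn S ↔ ∀ y ∉ S, ∃ M : Subgroup G, M.Normal ∧ M.FiniteIndex ∧
      ∀ s ∈ S, y⁻¹ * s ∉ M := by
  constructor
  · intro hS y hy
    obtain ⟨M, hn, hf, h⟩ := exists_coset_subset hS.isOpen_compl y hy
    exact ⟨M, hn, hf, fun s hs hm => h (mem_cosetSet.2 hm) hs⟩
  · intro h
    letI := profiniteTopology G
    rw [SeparableIn, ← isOpen_compl_iff]
    have heq : Sᶜ = ⋃₀ {V : Set G | (∃ y ∉ S, ∃ M : Subgroup G, M.Normal ∧ M.FiniteIndex ∧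
        (∀ s ∈ S, y⁻¹ * s ∉ M) ∧ V = cosetSet y M)} := by
      ext u
      constructor
      · intro hu
        obtain ⟨M, hn, hf, hM⟩ := h u hu
        exact ⟨cosetSet u M, ⟨u, hu, M, hn, hf, hM, rfl⟩, self_mem_cosetSet u M⟩
      · rintro ⟨V, ⟨y, hy, M, hn, hf, hM, rfl⟩, hu⟩
        intro huS
        exact hM u huS (mem_cosetSet.1 hu)
    rw [heq]
    apply isOpen_sUnion
    rintro V ⟨y, _, M, hn, hf, _, rfl⟩
    exact cosetSet_isOpen hn hf

lemma SeparableIn.mem_of_forall {S : Set G} (hS : SeparableIn S) {w : G}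
    (h : ∀ M : Subgroup G, M.Normal → M.FiniteIndex → ∃ s ∈ S, w⁻¹ * s ∈ M) : w ∈ S := by
  by_contra hw
  obtain ⟨M, hn, hf, hM⟩ := (separableIn_iff S).1 hS w hw
  obtain ⟨s, hs, hsm⟩ := h M hn hf
  exact hM s hs hsm

lemma SeparableIn.union {S T : Set G} (hS : SeparableIn S) (hT : SeparableIn T) :
    SeparableIn (S ∪ T) := by
  letI := profiniteTopology G; exact IsClosed.union hS hT

lemma SeparableIn.iUnion {ι : Type*} [Finite ι] {f : ι → Set G}
    (hf : ∀ i, SeparableIn (f i)) : SeparableIn (⋃ i, f i) :=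
by
  letI := profiniteTopology G; exact isClosed_iUnion_of_finite hf

lemma SeparableIn.translate {S : Set G} (hS : SeparableIn S) (u : G) :
    SeparableIn {x | ∃ s ∈ S, x = u * s} := by
  rw [separableIn_iff] at hS ⊢
  intro y hy
  have : u⁻¹ * y ∉ S := fun hc => hy ⟨u⁻¹ * y, hc, by group⟩
  obtain ⟨M, hn, hf, hM⟩ := hS _ this
  refine ⟨M, hn, hf, ?_⟩
  rintro _ ⟨s, hs, rfl⟩ hm
  exact hM s hs (by rwa [show (u⁻¹*y)⁻¹ * s = y⁻¹ * (u * s) by group])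

lemma conjugacySeparable_of_mulEquiv {G' : Type*} [Group G'] (e : G ≃* G')
    (h : ConjugacySeparable G) : ConjugacySeparable G' := by
  intro x'
  rw [separableIn_iff]
  intro y' hy'
  have hy : e.symm y' ∉ ConjClass (e.symm x') := by
    rintro ⟨g, hg⟩
    exact hy' ⟨e g, by
      have := congrArg e hg
      simpa [map_mul] using this⟩
  obtain ⟨M, hn, hf, hM⟩ := (separableIn_iff _).1 (h (e.symm x')) _ hy
  refine ⟨M.map e.toMonoidHom, hn.map _ e.surjective, ⟨?_⟩, ?_⟩
  · rw [Subgroup.index_map_eq _ e.surjective (by rw [e.toMonoidHom.ker_eq_bot_iff.2 e.injective]; exact bot_le)]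
    exact hf.index_ne_zero
  · rintro s' ⟨g', rfl⟩ hm
    obtain ⟨n, hn', hne⟩ := hm
    have hs : e.symm (g'⁻¹ * x' * g') ∈ ConjClass (e.symm x') :=
      ⟨e.symm g', by simp [map_mul]⟩
    refine hM _ hs ?_
    have : e.symm y'⁻¹ * e.symm (g'⁻¹ * x' * g') = (n : G) := by
      have := congrArg e.symm hne
      simpa [map_mul] using this.symm
    rw [show (e.symm y')⁻¹ = e.symm y'⁻¹ by simp, this]
    exact hn'

/-- Consume conjugacy separability of a subgroup in concrete ambient terms. -/
lemma conj_sep_consume (P : Subgroup G) (hcs : ConjugacySeparable P) {a y : G}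
    (ha : a ∈ P) (hy : y ∈ P) (hny : ∀ p ∈ P, p⁻¹ * a * p ≠ y) :
    ∃ N : Subgroup P, N.Normal ∧ N.FiniteIndex ∧
      ∀ p ∈ P, y⁻¹ * (p⁻¹ * a * p) ∉ (N.map P.subtype : Subgroup G) := by
  have hy' : (⟨y, hy⟩ : P) ∉ ConjClass (⟨a, ha⟩ : P) := by
    rintro ⟨g, hg⟩
    exact hny g g.2 (by simpa using congrArg Subtype.val hg)
  obtain ⟨N, hn, hf, hN⟩ := (separableIn_iff _).1 (hcs ⟨a, ha⟩) _ hy'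
  refine ⟨N, hn, hf, ?_⟩
  intro p hp hmem
  obtain ⟨n, hn', hne⟩ := hmem
  have : (⟨y, hy⟩ : P)⁻¹ * ((⟨p, hp⟩ : P)⁻¹ * ⟨a, ha⟩ * ⟨p, hp⟩) = n := by
    apply Subtype.ext
    simpa using hne.symm
  exact hN _ ⟨⟨p, hp⟩, rfl⟩ (this ▸ hn')

/-- Transfer separability-within-a-finite-index-subgroup to the ambient group. -/
lemma separableIn_of_subgroup (P : Subgroup G) (hP : P.FiniteIndex) {S : Set G}
    (hS : S ⊆ (P : Set G))
    (h : ∀ y ∈ P, y ∉ S → ∃ N : Subgroup P, N.Normal ∧ N.FiniteIndex ∧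
      ∀ s ∈ S, y⁻¹ * s ∉ (N.map P.subtype : Subgroup G)) :
    SeparableIn S := by
  rw [separableIn_iff]
  intro y hy
  by_cases hyP : y ∈ P
  · obtain ⟨N, hn, hf, hN⟩ := h y hyP hy
    have hfi : (N.map P.subtype).FiniteIndex := by
      constructor
      rw [Subgroup.index_map_subtype]
      exact Nat.mul_ne_zero hf.index_ne_zero hP.index_ne_zero
    refine ⟨(N.map P.subtype).normalCore, Subgroup.normalCore_normal _, inferInstance, ?_⟩
    intro s hs hmem
    exact hN s hs (Subgroup.normalCore_le _ hmem)
  · refine ⟨P.normalCore, Subgroup.normalCore_normal _, inferInstance, ?_⟩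
    intro s hs hmem
    have : y⁻¹ * s ∈ P := Subgroup.normalCore_le _ hmem
    exact hyP (by simpa using P.mul_mem (hS hs) (P.inv_mem this))

lemma conj_pow' (g u : G) (k : ℕ) : (g⁻¹ * u * g) ^ k = g⁻¹ * u ^ k * g := by
  induction k with
  | zero => group
  | succ n ih => rw [pow_succ, pow_succ, ih]; group

lemma pow_cosetSet {M : Subgroup G} (hMn : M.Normal) {y u : G} (h : y⁻¹ * u ∈ M) (k : ℕ) :
    (y ^ k)⁻¹ * u ^ k ∈ M := by
  induction k with
  | zero => simpa using M.one_mem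
  | succ n ih =>
      have h1 : (y ^ (n+1))⁻¹ * u ^ (n+1) =
          (y⁻¹ * ((y ^ n)⁻¹ * u ^ n) * y) * (y⁻¹ * u) := by
        rw [pow_succ, pow_succ]; group
      rw [h1]
      exact M.mul_mem (by simpa using hMn.conj_mem _ ih y⁻¹) h

/-- The centralizer condition instance. -/
lemma centralizer_cond {H : Subgroup G} (hHn : H.Normal) (hHf : H.FiniteIndex)
    (hH : HereditarilyConjugacySeparable H) {z : G} (hzH : z ∈ H)
    (M : Subgroup G) (hMn : M.Normal) (hMf : M.FiniteIndex) :
    ∃ L : Subgroup G, L.Normal ∧ L.FiniteIndex ∧ L ≤ M ∧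
      ∀ g : G, z⁻¹ * (g⁻¹ * z * g) ∈ L →
        ∃ c ∈ Subgroup.centralizer {z}, c⁻¹ * g ∈ M := by
  haveI := hHn; haveI := hHf; haveI := hMn; haveI := hMf
  set C := Subgroup.centralizer ({z} : Set G) with hC
  have hzC : z ∈ C := Subgroup.mem_centralizer_iff.2 (by simp)
  set K : Subgroup G := M ⊓ H with hK
  haveI hKn : K.Normal := ⟨fun n hn g => ⟨hMn.conj_mem _ hn.1 g, hHn.conj_mem _ hn.2 g⟩⟩
  haveI hKf : K.FiniteIndex := inferInstance
  have hKM : K ≤ M := inf_le_left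
  have hKH : K ≤ H := inf_le_right
  set A : Subgroup G := Subgroup.zpowers z ⊔ K with hA
  have hKA : K ≤ A := le_sup_right
  have hzA : z ∈ A := Subgroup.mem_sup_left (Subgroup.mem_zpowers z)
  have hAH : A ≤ H := sup_le ((Subgroup.zpowers_le).2 hzH) hKH
  haveI hAf : A.FiniteIndex := Subgroup.finiteIndex_of_le hKA
  -- decomposition of elements of A
  have hdec : ∀ a ∈ A, ∃ p, (∃ j : ℤ, z ^ j = p) ∧ ∃ k ∈ K, a = p * k := by
    intro a ha
    have : a ∈ (Subgroup.zpowers z : Set G) * (K : Set G) := by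
      rw [← Subgroup.mul_normal]; exact_mod_cast ha
    obtain ⟨p, hp, k, hk, hpk⟩ := this
    exact ⟨p, Subgroup.mem_zpowers_iff.1 hp, k, hk, hpk.symm⟩
  -- elements of A are in C*K
  have hInCK_A : ∀ a ∈ A, ∃ c ∈ C, c⁻¹ * a ∈ K := by
    intro a ha
    obtain ⟨p, ⟨j, hj⟩, k, hk, rfl⟩ := hdec a ha
    refine ⟨p, ?_, by simpa using hk⟩
    rw [← hj]
    exact Subgroup.zpow_mem _ hzC j
  -- right multiplication stability of C*K
  have hInCK_mul : ∀ g, (∃ c ∈ C, c⁻¹ * g ∈ K) → ∀ a ∈ A, ∃ c ∈ C, c⁻¹ * (g * a) ∈ K := by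
    rintro g ⟨c, hc, hck⟩ a ha
    obtain ⟨p, ⟨j, hj⟩, k, hk, rfl⟩ := hdec a ha
    refine ⟨c * p, C.mul_mem hc (by rw [← hj]; exact Subgroup.zpow_mem _ hzC j), ?_⟩
    have hid : (c * p)⁻¹ * (g * (p * k)) = (p⁻¹ * (c⁻¹ * g) * p) * k := by group
    rw [hid]
    exact K.mul_mem (by simpa using hKn.conj_mem _ hck p⁻¹) hk
  -- conjugacy separability of A
  have hcsA : ConjugacySeparable A := by
    have h1 : ConjugacySeparable (A.subgroupOf H) :=
      hH (A.subgroupOf H) inferInstance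
    exact conjugacySeparable_of_mulEquiv (Subgroup.subgroupOfEquivOfLe hAH) h1
  -- finite system of representatives
  haveI : Finite (G ⧸ H) := inferInstance
  haveI : Finite (H ⧸ A.subgroupOf H) := inferInstance
  set ι := (G ⧸ H) × (H ⧸ A.subgroupOf H) with hι
  set w : ι → G := fun i => ((i.1.out * (i.2.out : G)))⁻¹ * z * (i.1.out * (i.2.out : G)) with hw
  have hreps : ∀ g : G, ∃ i : ι, ∃ a ∈ A, g⁻¹ * z * g = a⁻¹ * w i * a := by
    intro g
    obtain ⟨h, hh⟩ := QuotientGroup.mk_out_eq_mul H g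
    set q : G ⧸ H := QuotientGroup.mk g with hq
    obtain ⟨b, hb⟩ := QuotientGroup.mk_out_eq_mul (A.subgroupOf H) h⁻¹
    set r : H ⧸ A.subgroupOf H := QuotientGroup.mk h⁻¹ with hr
    refine ⟨(q, r), ((b : H) : G)⁻¹, A.inv_mem (Subgroup.mem_subgroupOf.1 b.2), ?_⟩
    have hgeq : g = (q.out * (r.out : G)) * ((b : H) : G)⁻¹ := by
      have h1 : (q.out : G) = g * (h : G) := hh
      have h2 : ((r.out : H) : G) = ((h⁻¹ * b : H) : G) := by exact_mod_cast congrArg Subtype.val hb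
      rw [h1, h2]
      push_cast
      group
    rw [hgeq, hw]
    group
  -- the separating subgroups
  have hNex : ∀ i : ι, ∃ N : Subgroup A, N.Normal ∧ N.FiniteIndex ∧
      ((w i ∈ A ∧ ∀ a ∈ A, a⁻¹ * w i * a ≠ z) →
        ∀ p ∈ A, z⁻¹ * (p⁻¹ * w i * p) ∉ (N.map A.subtype : Subgroup G)) := by
    intro i
    by_cases hPi : w i ∈ A ∧ ∀ a ∈ A, a⁻¹ * w i * a ≠ z
    · obtain ⟨N, h1, h2, h3⟩ := conj_sep_consume A hcsA hPi.1 hzA hPi.2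
      exact ⟨N, h1, h2, fun _ => h3⟩
    · exact ⟨⊤, inferInstance, inferInstance, fun h => absurd h hPi⟩
  choose N hN1 hN2 hN3 using hNex
  set N₀ : Subgroup A := ⨅ i, N i with hN₀
  haveI hN₀f : N₀.FiniteIndex := Subgroup.finiteIndex_iInf hN2
  set NG : Subgroup G := N₀.map A.subtype with hNG
  haveI hNGf : NG.FiniteIndex := by
    constructor
    rw [hNG, Subgroup.index_map_subtype]
    exact Nat.mul_ne_zero hN₀f.index_ne_zero hAf.index_ne_zero
  refine ⟨NG.normalCore ⊓ K, ⟨fun n hn g =>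
      ⟨(Subgroup.normalCore_normal NG).conj_mem _ hn.1 g, hKn.conj_mem _ hn.2 g⟩⟩,
    inferInstance, inf_le_right.trans hKM, ?_⟩
  intro g hg
  by_contra hcon
  push_neg at hcon
  set u : G := g⁻¹ * z * g with hu
  have huK : z⁻¹ * u ∈ K := hg.2
  have huNG : z⁻¹ * u ∈ NG := Subgroup.normalCore_le _ hg.1
  obtain ⟨i, a, haA, hua⟩ := hreps g
  have huA : u ∈ A := by
    have : u = z * (z⁻¹ * u) := by group
    rw [this]; exact A.mul_mem hzA (hKA huK)
  have hwA : w i ∈ A := by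
    have : w i = a * u * a⁻¹ := by rw [hu, hua]; group
    rw [this]
    exact A.mul_mem (A.mul_mem haA huA) (A.inv_mem haA)
  have hPi : w i ∈ A ∧ ∀ a' ∈ A, a'⁻¹ * w i * a' ≠ z := by
    refine ⟨hwA, ?_⟩
    intro a' ha' heq
    -- then u = e⁻¹ * z * e with e := (a⁻¹ * a')⁻¹... derive membership in C*K for g
    set e : G := (a⁻¹ * a')⁻¹ with he
    have heA : e ∈ A := A.inv_mem (A.mul_mem (A.inv_mem haA) ha')
    have hue : u = e⁻¹ * z * e := by
      rw [hu, hua, ← heq, he]; group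
    set c₀ : G := g * e⁻¹ with hc₀
    have hc₀C : c₀ ∈ C := by
      rw [Subgroup.mem_centralizer_iff]
      intro s hs
      have hsz : s = z := hs
      rw [hsz]
      -- z * c₀ = c₀ * z
      have h1 : g⁻¹ * z * g = e⁻¹ * z * e := by rw [← hu]; exact hue
      have h2 : z * (g * e⁻¹) = g * (g⁻¹ * z * g) * e⁻¹ := by group
      rw [hc₀, h2, h1]
      group
    obtain ⟨c₁, hc₁C, hc₁K⟩ := hInCK_A e heA
    refine hcon (c₀ * c₁) (C.mul_mem hc₀C hc₁C) (hKM ?_)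
    have hge : g = c₀ * e := by rw [hc₀]; group
    have : (c₀ * c₁)⁻¹ * g = c₁⁻¹ * e := by rw [hge]; group
    rw [this]
    exact hc₁K
  -- contradiction with the separating subgroup
  refine hN3 i hPi a haA ?_
  have h1 : z⁻¹ * (a⁻¹ * w i * a) = z⁻¹ * u := by rw [hu, hua]
  rw [h1]
  have : NG ≤ (N i).map A.subtype := Subgroup.map_mono (iInf_le N i)
  exact this huNG

lemma conjClass_separable_of_normal {H : Subgroup G} (hHn : H.Normal) (hHf : H.FiniteIndex)
    (hcsH : ConjugacySeparable H) {z : G} (hzH : z ∈ H) : SeparableIn (ConjClass z) := by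
  haveI := hHn; haveI := hHf
  have hunion : ConjClass z =
      ⋃ q : G ⧸ H, {u | ∃ h ∈ H, h⁻¹ * ((q.out)⁻¹ * z * q.out) * h = u} := by
    ext u
    constructor
    · rintro ⟨g, rfl⟩
      obtain ⟨h, hh⟩ := QuotientGroup.mk_out_eq_mul H g
      refine Set.mem_iUnion.2 ⟨QuotientGroup.mk g, (h : G)⁻¹, H.inv_mem h.2, ?_⟩
      rw [hh]; group
    · intro hu
      obtain ⟨q, h, hh, rfl⟩ := Set.mem_iUnion.1 hu
      exact ⟨q.out * h, by group⟩
  rw [hunion]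
  apply SeparableIn.iUnion
  intro q
  have hwH : (q.out)⁻¹ * z * q.out ∈ H := by
    simpa [mul_assoc] using hHn.conj_mem z hzH (q.out)⁻¹
  apply separableIn_of_subgroup H hHf
  · rintro u ⟨h, hh, rfl⟩
    exact H.mul_mem (H.mul_mem (H.inv_mem hh) hwH) hh
  · intro y hyH hyS
    obtain ⟨N, h1, h2, h3⟩ := conj_sep_consume H hcsH hwH hyH
      (fun p hp hne => hyS ⟨p, hp, hne⟩)
    refine ⟨N, h1, h2, ?_⟩
    rintro s ⟨h, hh, rfl⟩
    exact h3 h hh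
end Aux


/-- Chagas–Zalesskii criterion. -/
theorem stmt_2 {G : Type*} [Group G] (H : Subgroup G) (hHn : H.Normal) (m : ℕ) (hm : 0 < m)
    (hidx : H.index = m) (x : G)
    (hH : HereditarilyConjugacySeparable H)
    (hcs : ConjugacySeparable (Subgroup.centralizer {x ^ m} : Subgroup G))
    (hsep : ∀ N : Subgroup (Subgroup.centralizer {x ^ m} : Subgroup G), N.FiniteIndex →
      SeparableIn ((Subgroup.map (Subgroup.centralizer {x ^ m}).subtype N : Subgroup G) : Set G)) :
    SeparableIn (ConjClass x) := by
  haveI := hHn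
  haveI hHf : H.FiniteIndex := ⟨by rw [hidx]; omega⟩
  set z := x ^ m with hz
  have hzH : z ∈ H := by rw [hz, ← hidx]; exact H.pow_index_mem x
  set Cg := Subgroup.centralizer ({z} : Set G) with hCg
  have hcsH : ConjugacySeparable H :=
    conjugacySeparable_of_mulEquiv Subgroup.topEquiv (hH ⊤ inferInstance)
  rw [separableIn_iff]
  intro y hyx
  by_contra hcon0
  push_neg at hcon0
  refine hyx ?_
  have hy : ∀ M : Subgroup G, M.Normal → M.FiniteIndex →
      ∃ g : G, y⁻¹ * (g⁻¹ * x * g) ∈ M := by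
    intro M hn hf
    obtain ⟨s, ⟨g, rfl⟩, hmem⟩ := hcon0 M hn hf
    exact ⟨g, hmem⟩
  have hzsep : SeparableIn (ConjClass z) :=
    conjClass_separable_of_normal hHn hHf hcsH hzH
  have hym : y ^ m ∈ ConjClass z := by
    apply hzsep.mem_of_forall
    intro M hn hf
    obtain ⟨g, hg⟩ := hy M hn hf
    refine ⟨g⁻¹ * z * g, ⟨g, rfl⟩, ?_⟩
    have h2 := pow_cosetSet hn hg m
    rwa [conj_pow'] at h2
  obtain ⟨g₀, hg₀⟩ := hym
  set y₁ := g₀ * y * g₀⁻¹ with hy₁def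
  have hconjpow : (g₀ * y * g₀⁻¹) ^ m = g₀ * y ^ m * g₀⁻¹ := by
    have h3 := conj_pow' g₀⁻¹ y m
    simpa using h3
  have hy₁m : y₁ ^ m = z := by
    rw [hy₁def, hconjpow, ← hg₀]; group
  have hy₁ : ∀ M : Subgroup G, M.Normal → M.FiniteIndex →
      ∃ g : G, y₁⁻¹ * (g⁻¹ * x * g) ∈ M := by
    intro M hn hf
    obtain ⟨g, hg⟩ := hy M hn hf
    refine ⟨g * g₀⁻¹, ?_⟩
    have h2 : y₁⁻¹ * ((g * g₀⁻¹)⁻¹ * x * (g * g₀⁻¹)) =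
        g₀ * (y⁻¹ * (g⁻¹ * x * g)) * g₀⁻¹ := by rw [hy₁def]; group
    rw [h2]
    simpa using hn.conj_mem _ hg g₀
  have hxC : x ∈ Cg := by
    rw [hCg, Subgroup.mem_centralizer_iff]
    intro s hs
    rw [show s = z from hs, hz]
    exact pow_mul_comm' x m
  have hy₁C : y₁ ∈ Cg := by
    rw [hCg, Subgroup.mem_centralizer_iff]
    intro s hs
    rw [show s = z from hs, ← hy₁m]
    exact pow_mul_comm' y₁ m
  have hxconj : ∀ c : G, c⁻¹ * x * c = y₁ → y ∈ ConjClass x := by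
    intro c hc
    refine ⟨c * g₀, ?_⟩
    rw [show (c * g₀)⁻¹ * x * (c * g₀) = g₀⁻¹ * (c⁻¹ * x * c) * g₀ by group, hc, hy₁def]
    group
  by_cases hcC : ∃ c ∈ Cg, c⁻¹ * x * c = y₁
  · obtain ⟨c, _, hc⟩ := hcC
    exact hxconj c hc
  · exfalso
    push_neg at hcC
    obtain ⟨N, hNn, hNf, hN⟩ := conj_sep_consume Cg hcs hxC hy₁C hcC
    haveI := hNf
    set NG : Subgroup G := N.map Cg.subtype with hNG
    have hNGsep : SeparableIn (NG : Set G) := hsep N hNf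
    haveI : Finite (Cg ⧸ N) := Subgroup.finite_quotient_of_finiteIndex
    set J := {q : Cg ⧸ N // ∃ c ∈ Cg, ((q.out : Cg) : G)⁻¹ * (c⁻¹ * x * c) ∈ NG} with hJ
    haveI : Finite J := Subtype.finite
    set T : Set G := ⋃ j : J, cosetSet ((j.1.out : Cg) : G) NG with hT
    have hTsep : SeparableIn T := by
      apply SeparableIn.iUnion
      intro j
      exact hNGsep.translate _
    have hxCT : ∀ c ∈ Cg, c⁻¹ * x * c ∈ T := by
      intro c hc
      have huC : c⁻¹ * x * c ∈ Cg := Cg.mul_mem (Cg.mul_mem (Cg.inv_mem hc) hxC) hc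
      set uu : Cg := ⟨c⁻¹ * x * c, huC⟩ with huu
      obtain ⟨n, hn⟩ := QuotientGroup.mk_out_eq_mul N uu
      have hval : (((QuotientGroup.mk uu : Cg ⧸ N).out : Cg) : G) = (c⁻¹ * x * c) * ((n : Cg) : G) := by
        rw [hn]; rfl
      have hmem1 : ((QuotientGroup.mk uu : Cg ⧸ N).out : G)⁻¹ * (c⁻¹ * x * c) ∈ NG := by
        refine ⟨(n : Cg)⁻¹, N.inv_mem n.2, ?_⟩
        rw [Subgroup.coe_subtype]
        push_cast
        rw [hval]
        group
      refine Set.mem_iUnion.2 ⟨⟨QuotientGroup.mk uu, c, hc, hmem1⟩, ?_⟩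
      exact mem_cosetSet.2 hmem1
    have hy₁T : y₁ ∉ T := by
      intro hy₁T
      obtain ⟨j, hj⟩ := Set.mem_iUnion.1 hy₁T
      obtain ⟨c, hc, hcN⟩ := j.2
      have h1 : ((j.1.out : Cg) : G)⁻¹ * y₁ ∈ NG := mem_cosetSet.1 hj
      have h2 : y₁⁻¹ * (c⁻¹ * x * c) ∈ NG := by
        have h3 := NG.mul_mem (NG.inv_mem h1) hcN
        rwa [show (((j.1.out : Cg) : G)⁻¹ * y₁)⁻¹ * (((j.1.out : Cg) : G)⁻¹ * (c⁻¹ * x * c)) =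
          y₁⁻¹ * (c⁻¹ * x * c) by group] at h3
      exact hN c hc h2
    obtain ⟨M₀, hM₀n, hM₀f, hM₀⟩ := (separableIn_iff T).1 hTsep y₁ hy₁T
    obtain ⟨L, hLn, hLf, hLM, hCC⟩ := centralizer_cond hHn hHf hH hzH M₀ hM₀n hM₀f
    obtain ⟨g, hg⟩ := hy₁ L hLn hLf
    have hzg : z⁻¹ * (g⁻¹ * z * g) ∈ L := by
      have h2 := pow_cosetSet hLn hg m
      rwa [conj_pow', hy₁m] at h2
    obtain ⟨c, hcC2, hcM⟩ := hCC g hzg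
    refine hM₀ _ (hxCT c hcC2) ?_
    set u := c⁻¹ * g with hu2
    have hxg : g⁻¹ * x * g =
        (c⁻¹ * x * c) * (((c⁻¹ * x * c)⁻¹ * u⁻¹ * (c⁻¹ * x * c)) * u) := by
      rw [hu2]; group
    have hnn : ((c⁻¹ * x * c)⁻¹ * u⁻¹ * (c⁻¹ * x * c)) * u ∈ M₀ :=
      M₀.mul_mem (by simpa using hM₀n.conj_mem _ (M₀.inv_mem hcM) (c⁻¹ * x * c)⁻¹) hcM
    have hfin : y₁⁻¹ * (c⁻¹ * x * c) =
        (y₁⁻¹ * (g⁻¹ * x * g)) * (((c⁻¹ * x * c)⁻¹ * u⁻¹ * (c⁻¹ * x * c)) * u)⁻¹ := by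
      rw [hxg]; group
    rw [hfin]
    exact M₀.mul_mem (hLM hg) (M₀.inv_mem hnn)
end

section
/- Let G be a group with retracts A, B ≤ G whose retractions ρ_A and ρ_B commute. For x ∈ A and y ∈ B, the elements x and y are conjugate in G if and only if: (1) ρ_A(y) is conjugate to x in A; (2) ρ_B(x) is conjugate to y in B; and (3) ρ_{A∩B}(y) is conjugate to ρ_{A∩B}(x) in A ∩ B, where ρ_{A∩B} = ρ_A ∘ ρ_B. -/
/-- `ρ` is a retraction of `G` onto the subgroup `A`. -/
def IsRetraction {G : Type*} [Group G] (ρ : G →* G) (A : Subgroup G) : Prop :=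
  ρ.range = A ∧ ∀ a ∈ A, ρ a = a

/-- Conjugacy criterion via commuting retractions: for `x ∈ A`, `y ∈ B`,
`x` and `y` are conjugate in `G` iff `ρ_A(y) ∈ x^A`, `ρ_B(x) ∈ y^B` and
`ρ_{A∩B}(y)` is conjugate to `ρ_{A∩B}(x)` in `A ∩ B`. -/
theorem stmt_4 {G : Type*} [Group G] (A B : Subgroup G) (ρA ρB : G →* G)
    (hA : IsRetraction ρA A) (hB : IsRetraction ρB B)
    (hcomm : ∀ g : G, ρA (ρB g) = ρB (ρA g))
    (x y : G) (hx : x ∈ A) (hy : y ∈ B) :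
    (∃ g : G, g⁻¹ * x * g = y) ↔
      ((∃ a ∈ A, a⁻¹ * x * a = ρA y) ∧
       (∃ b ∈ B, b⁻¹ * y * b = ρB x) ∧
       (∃ c ∈ A ⊓ B, c⁻¹ * ρA (ρB x) * c = ρA (ρB y))) := by
  have memA : ∀ g : G, ρA g ∈ A := fun g => hA.1 ▸ ⟨g, rfl⟩
  have memB : ∀ g : G, ρB g ∈ B := fun g => hB.1 ▸ ⟨g, rfl⟩
  constructor
  · rintro ⟨g, hg⟩
    refine ⟨⟨ρA g, memA g, ?_⟩, ⟨(ρB g)⁻¹, inv_mem (memB g), ?_⟩,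
      ⟨ρA (ρB g), ⟨memA _, (hcomm g) ▸ memB _⟩, ?_⟩⟩
    · have := congrArg ρA hg
      simpa [map_mul, map_inv, hA.2 x hx] using this
    · have h2 := congrArg ρB hg
      simp only [map_mul, map_inv, hB.2 y hy] at h2
      rw [inv_inv, ← h2]; group
    · have := congrArg ρA (congrArg ρB hg)
      simpa [map_mul, map_inv] using this
  · rintro ⟨⟨a, ha, h1⟩, ⟨b, hb, h2⟩, ⟨c, hc, h3⟩⟩
    have e1 : ρA y = ρA b * ρA (ρB x) * (ρA b)⁻¹ := by
      have := congrArg ρA h2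
      simp only [map_mul, map_inv] at this
      rw [← this]; group
    have e2 : ρA (ρB y) = (ρB a)⁻¹ * ρB x * ρB a := by
      have := congrArg ρB h1
      simp only [map_mul, map_inv] at this
      rw [hcomm, ← this]
    have f1 : x = a * ρA y * a⁻¹ := by rw [← h1]; group
    have f3 : ρA (ρB x) = c * ρA (ρB y) * c⁻¹ := by rw [← h3]; group
    have f5 : ρB x = b⁻¹ * y * b := h2.symm
    refine ⟨a * ρA b * c * (ρB a)⁻¹ * b⁻¹, ?_⟩
    rw [f1, e1, f3, e2, f5]; group
end

section
/- Let G be a group with subgroups A, H ≤ G such that H has finite index in G and A is a retract of G. If H is hereditarily conjugacy separable, then A ∩ H is hereditarily conjugacy separable. -/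
/-- If a subgroup has nonzero index, its relative index in any subgroup is nonzero. -/
lemma relindexNeZeroAux {G : Type*} [Group G] {N K : Subgroup G} (h : N.index ≠ 0) :
    N.relIndex K ≠ 0 := fun h0 => h (by
  have h1 := Subgroup.relIndex_eq_zero_of_le_right (le_top : K ≤ ⊤) h0
  rwa [Subgroup.relIndex_top_right] at h1)

/-- Preimages of finite-index subgroups under homomorphisms have finite index. -/
lemma finiteIndexComapAux {K L : Type*} [Group K] [Group L] (f : K →* L) {N : Subgroup L}
    (h : N.FiniteIndex) : (N.comap f).FiniteIndex :=
  ⟨by rw [Subgroup.index_comap]; exact relindexNeZeroAux h.index_ne_zero⟩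

/-- Any group homomorphism is continuous for the profinite topologies. -/
lemma profiniteContinuousAux {K L : Type*} [Group K] [Group L] (f : K →* L) :
    @Continuous K L (profiniteTopology K) (profiniteTopology L) f := by
  rw [profiniteTopology, profiniteTopology]
  rw [continuous_generateFrom_iff]
  rintro C ⟨N, hN, hNfi, g, rfl⟩
  by_cases hne : (f ⁻¹' {x | ∃ n ∈ N, x = g * n}).Nonempty
  · obtain ⟨k₀, n₀, hn₀, hk₀⟩ := hne
    apply TopologicalSpace.isOpen_generateFrom_of_mem
    refine ⟨N.comap f, hN.comap f, finiteIndexComapAux f hNfi, k₀, ?_⟩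
    ext k
    simp only [Set.mem_preimage, Set.mem_setOf_eq, Subgroup.mem_comap]
    constructor
    · rintro ⟨n, hn, hfk⟩
      refine ⟨k₀⁻¹ * k, ?_, by group⟩
      have hval : f (k₀⁻¹ * k) = n₀⁻¹ * n := by
        rw [map_mul, map_inv, hk₀, hfk]; group
      rw [hval]
      exact N.mul_mem (N.inv_mem hn₀) hn
    · rintro ⟨m, hm, rfl⟩
      exact ⟨n₀ * f m, N.mul_mem hn₀ hm, by rw [map_mul, hk₀]; group⟩
  · rw [Set.not_nonempty_iff_eq_empty] at hne
    rw [hne]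
    exact @isOpen_empty _ (TopologicalSpace.generateFrom _)

/-- Conjugacy separability passes to retracts. -/
lemma conjSepOfRetractAux {K L : Type*} [Group K] [Group L] (ι : K →* L) (r : L →* K)
    (hri : ∀ k, r (ι k) = k) (hL : ConjugacySeparable L) : ConjugacySeparable K := by
  intro x
  have heq : ConjClass x = ι ⁻¹' ConjClass (ι x) := by
    ext y
    constructor
    · rintro ⟨g, rfl⟩
      exact ⟨ι g, by simp [map_mul]⟩
    · rintro ⟨g, hg⟩
      refine ⟨r g, ?_⟩
      have h2 := congrArg r hg
      rwa [map_mul, map_mul, map_inv, hri, hri] at h2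
  rw [SeparableIn, heq]
  exact @IsClosed.preimage K L (profiniteTopology K) (profiniteTopology L) ι
    (profiniteContinuousAux ι) _ (hL (ι x))

/-- If `H` has finite index in `G`, `A` is a retract of `G`, and `H` is hereditarily
conjugacy separable, then `A ∩ H` is hereditarily conjugacy separable. -/
theorem stmt_5 {G : Type*} [Group G] (A H : Subgroup G) (hH : H.FiniteIndex)
    (ρ : G →* G) (hρ : IsRetraction ρ A)
    (hhcs : HereditarilyConjugacySeparable H) :
    HereditarilyConjugacySeparable (A ⊓ H : Subgroup G) := by
  obtain ⟨hrange, hfix⟩ := hρ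
  intro K hK
  let P : Subgroup G := A ⊓ H
  let K' : Subgroup G := K.map P.subtype
  have hK'P : K' ≤ P := by
    rintro _ ⟨k, _, rfl⟩
    exact k.2
  let f : ↥H →* G := ρ.comp H.subtype
  let L : Subgroup ↥H := K'.comap f
  have hLfi : L.FiniteIndex := by
    constructor
    rw [Subgroup.index_comap]
    have h1 : K'.relIndex P ≠ 0 := by
      have he : (K.map P.subtype).comap P.subtype = K :=
        Subgroup.comap_map_eq_self_of_injective P.subtype_injective K
      rw [Subgroup.relIndex, Subgroup.subgroupOf]
      show ((K.map P.subtype).comap P.subtype).index ≠ 0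
      rw [he]
      exact hK.index_ne_zero
    have h2 : P.relIndex A ≠ 0 := by
      show (A ⊓ H).relIndex A ≠ 0
      rw [Subgroup.inf_relIndex_left]
      exact relindexNeZeroAux hH.index_ne_zero
    have h3 : K'.relIndex A ≠ 0 := by
      rw [← Subgroup.relIndex_mul_relIndex K' P A hK'P inf_le_left]
      exact mul_ne_zero h1 h2
    have hra : f.range ≤ A := by
      rintro _ ⟨h, rfl⟩
      rw [← hrange]
      exact ⟨_, rfl⟩
    intro h0
    exact h3 (Subgroup.relIndex_eq_zero_of_le_right hra h0)
  have hfixA : ∀ g : G, g ∈ A → ρ g = g := hfix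
  -- the inclusion ι : K → L
  have hιmem : ∀ k : ↥K, (⟨((k : ↥P) : G), (k : ↥P).2.2⟩ : ↥H) ∈ L := by
    intro k
    have hA : ((k : ↥P) : G) ∈ A := (k : ↥P).2.1
    show ρ ((k : ↥P) : G) ∈ K'
    rw [hfixA _ hA]
    exact ⟨(k : ↥P), k.2, rfl⟩
  let ι : ↥K →* ↥L :=
    { toFun := fun k => ⟨⟨((k : ↥P) : G), (k : ↥P).2.2⟩, hιmem k⟩
      map_one' := rfl
      map_mul' := fun a b => rfl }
  -- the retraction r : L → K
  have hmemP : ∀ l : ↥L, ρ (((l : ↥H) : G)) ∈ P := by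
    intro l
    exact hK'P l.2
  have hmemK : ∀ l : ↥L, (⟨ρ (((l : ↥H) : G)), hmemP l⟩ : ↥P) ∈ K := by
    intro l
    obtain ⟨p, hp, hpe⟩ := l.2
    have : p = (⟨ρ (((l : ↥H) : G)), hmemP l⟩ : ↥P) := Subtype.ext hpe
    exact this ▸ hp
  let r : ↥L →* ↥K :=
    { toFun := fun l => ⟨⟨ρ (((l : ↥H) : G)), hmemP l⟩, hmemK l⟩
      map_one' := by
        apply Subtype.ext; apply Subtype.ext
        simp
      map_mul' := fun a b => by
        apply Subtype.ext; apply Subtype.ext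
        simp }
  have hri : ∀ k : ↥K, r (ι k) = k := by
    intro k
    apply Subtype.ext; apply Subtype.ext
    exact hfixA _ (k : ↥P).2.1
  exact conjSepOfRetractAux ι r hri (hhcs L hLfi)
end

section
/- Every finite group acting on a tree (by graph automorphisms without inversions) fixes a vertex. -/
open SimpleGraph

/-- In a tree, if `m` lies on the (unique) path from `x` to `y`, then `m` lies on a
shortest path from `u` to `x` or from `u` to `y`. -/
lemma tree_split_aux {V : Type*} (T : SimpleGraph V) (hT : T.IsTree)
    (u x y m : V) (R : T.Walk x y) (hR : R.IsPath) (hm : m ∈ R.support) :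
    T.dist u m + T.dist m x ≤ T.dist u x ∨ T.dist u m + T.dist m y ≤ T.dist u y := by
  classical
  obtain ⟨P, hP, hPl⟩ := (hT.isConnected u x).exists_path_of_dist
  obtain ⟨Q, hQ, hQl⟩ := (hT.isConnected u y).exists_path_of_dist
  set W : T.Walk x y := P.reverse.append Q with hW
  have hbp : W.bypass = R := by
    have := hT.IsAcyclic.path_unique ⟨W.bypass, W.bypass_isPath⟩ ⟨R, hR⟩
    exact congrArg Subtype.val this
  have hmW : m ∈ W.support := W.support_bypass_subset (hbp ▸ hm)
  rw [Walk.mem_support_append_iff] at hmW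
  cases hmW with
  | inl h =>
    left
    rw [Walk.support_reverse, List.mem_reverse] at h
    have hsplit : (P.takeUntil m h).length + (P.dropUntil m h).length = P.length := by
      rw [← Walk.length_append, Walk.take_spec]
    have h1 : T.dist u m ≤ (P.takeUntil m h).length := dist_le _
    have h2 : T.dist m x ≤ (P.dropUntil m h).length := dist_le _
    omega
  | inr h =>
    right
    have hsplit : (Q.takeUntil m h).length + (Q.dropUntil m h).length = Q.length := by
      rw [← Walk.length_append, Walk.take_spec]
    have h1 : T.dist u m ≤ (Q.takeUntil m h).length := dist_le _
    have h2 : T.dist m y ≤ (Q.dropUntil m h).length := dist_le _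
    omega

/-- In a tree, if `dist x y ≥ 2` there is a vertex `m` adjacent to `x` on the geodesic,
with good distance estimates to every point. -/
lemma tree_mid {V : Type*} (T : SimpleGraph V) (hT : T.IsTree)
    (x y : V) (h2 : 2 ≤ T.dist x y) :
    ∃ m : V, T.dist m x = 1 ∧ T.dist m y + 1 = T.dist x y ∧
      ∀ u : V, T.dist u m + 1 ≤ T.dist u x ∨ T.dist u m + T.dist m y ≤ T.dist u y := by
  obtain ⟨R, hR, hRl⟩ := (hT.isConnected x y).exists_path_of_dist
  cases R with
  | nil => rw [SimpleGraph.dist_self] at h2; omega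
  | @cons _ m _ hxm R' =>
    have hR'len : R'.length + 1 = T.dist x y := by
      simpa [Walk.length_cons] using hRl
    have hdm : T.dist m y ≤ R'.length := dist_le _
    have htri : T.dist x y ≤ T.dist x m + T.dist m y := hT.isConnected.dist_triangle
    have hxm1 : T.dist x m ≤ 1 := by
      have := dist_le (Walk.cons hxm (Walk.nil));
      simpa using this
    have hmy : T.dist m y + 1 = T.dist x y := by omega
    have hmx : T.dist m x = 1 := by
      rw [dist_comm]
      have : x ≠ m := by
        rintro rfl; omega
      have := (hT.isConnected x m).pos_dist_of_ne this
      omega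
    refine ⟨m, hmx, hmy, fun u => ?_⟩
    have hmem : m ∈ (Walk.cons hxm R').support := by
      simp [Walk.support_cons]
    have := tree_split_aux T hT u x y m _ hR hmem
    rw [hmx] at this
    exact this

/-- Every finite group acting on a tree by graph automorphisms without inversions
fixes a vertex. -/
theorem stmt_10 {V : Type*} (T : SimpleGraph V) (hT : T.IsTree)
    {G : Type*} [Group G] [Finite G] [MulAction G V]
    (hact : ∀ (g : G) (u v : V), T.Adj u v → T.Adj (g • u) (g • v))
    (hninv : ∀ (g : G) (u v : V), T.Adj u v → ¬(g • u = v ∧ g • v = u)) :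
    ∃ v : V, ∀ g : G, g • v = v := by
  classical
  have := Fintype.ofFinite G
  obtain ⟨v₀⟩ := hT.isConnected.nonempty
  -- the action is by isometries
  have hisom : ∀ (g : G) (u v : V), T.dist (g • u) (g • v) = T.dist u v := by
    have hle : ∀ (g : G) (u v : V), T.dist (g • u) (g • v) ≤ T.dist u v := by
      intro g u v
      obtain ⟨p, hp⟩ := (hT.isConnected u v).exists_walk_length_eq_dist
      have := dist_le (p.map (⟨fun w => g • w, fun h => hact g _ _ h⟩ : T →g T))
      simpa [hp] using this
    intro g u v
    refine le_antisymm (hle g u v) ?_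
    have := hle g⁻¹ (g • u) (g • v)
    simpa using this
  -- the radius function
  set r : V → ℕ := fun v => Finset.univ.sup (fun g : G => T.dist v (g • v₀)) with hr
  have hrle : ∀ v (g : G), T.dist v (g • v₀) ≤ r v := fun v g =>
    Finset.le_sup (f := fun g : G => T.dist v (g • v₀)) (Finset.mem_univ g)
  have hrle' : ∀ (g : G) (v : V), r (g • v) ≤ r v := by
    intro g v
    apply Finset.sup_le
    intro h _
    have : T.dist (g • v) (h • v₀) = T.dist v ((g⁻¹ * h) • v₀) := by
      rw [mul_smul]
      conv_lhs => rw [← hisom g⁻¹ (g • v) (h • v₀)]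
      rw [inv_smul_smul]
    rw [this]
    exact hrle v (g⁻¹ * h)
  have hrinv : ∀ (g : G) (v : V), r (g • v) = r v := by
    intro g v
    refine le_antisymm (hrle' g v) ?_
    have := hrle' g⁻¹ (g • v)
    rwa [inv_smul_smul] at this
  -- minimize r
  set r₀ : ℕ := sInf (Set.range r) with hr₀
  obtain ⟨c, hc⟩ : ∃ c, r c = r₀ := by
    have hne : Nonempty V := ⟨v₀⟩
    have : r₀ ∈ Set.range r := Nat.sInf_mem (Set.range_nonempty r)
    obtain ⟨c, hc⟩ := this
    exact ⟨c, hc⟩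
  have hmin : ∀ v, r₀ ≤ r v := fun v => Nat.sInf_le ⟨v, rfl⟩
  -- any two distinct "central" vertices are adjacent
  have hadj : ∀ x y : V, r x = r₀ → r y = r₀ → x ≠ y → T.Adj x y := by
    intro x y hx hy hxy
    have hd1 : T.dist x y = 1 := by
      by_contra hne
      have hpos := (hT.isConnected x y).pos_dist_of_ne hxy
      have h2 : 2 ≤ T.dist x y := by omega
      obtain ⟨m, hmx, hmy, hkey⟩ := tree_mid T hT x y h2
      -- r m < r₀
      have dc : ∀ a b : V, T.dist a b = T.dist b a := fun a b => dist_comm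
      have hr0pos : 1 ≤ r₀ := by
        have ht : T.dist x y ≤ T.dist x ((1:G) • v₀) + T.dist ((1:G) • v₀) y :=
          hT.isConnected.dist_triangle
        rw [dc ((1:G) • v₀) y] at ht
        have h1' := hrle x 1
        have h2' := hrle y 1
        omega
      have hrm : r m + 1 ≤ r₀ := by
        have : ∀ g : G, T.dist m (g • v₀) + 1 ≤ r₀ := by
          intro g
          have hmy1 : 1 ≤ T.dist m y := by omega
          rcases hkey (g • v₀) with h | h
          · have hh := hrle x g
            rw [dc (g • v₀) m, dc (g • v₀) x] at h
            omega
          · have hh := hrle y g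
            rw [dc (g • v₀) m, dc (g • v₀) y] at h
            omega
        have : r m < r₀ := by
          rw [hr]
          apply Finset.sup_lt_iff (by rw [bot_eq_zero]; omega : (⊥:ℕ) < r₀) |>.2
          intro g _
          have := this g
          omega
        omega
      have := hmin m
      omega
    exact SimpleGraph.dist_eq_one_iff_adj.mp hd1
  -- no triangles in a tree
  have hnotri : ∀ x y z : V, T.Adj x y → T.Adj y z → T.Adj x z → False := by
    intro x y z h1 h2 h3
    have hp1 : (Walk.cons h1 Walk.nil : T.Walk x y).IsPath := by
      simp [Walk.cons_isPath_iff]; exact h1.ne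
    have hp2 : (Walk.cons h3 (Walk.cons h2.symm Walk.nil) : T.Walk x y).IsPath := by
      simp [Walk.cons_isPath_iff]
      exact ⟨h2.ne', ⟨h3.ne, h1.ne⟩⟩
    have := hT.IsAcyclic.path_unique ⟨_, hp1⟩ ⟨_, hp2⟩
    have hlen := congrArg (fun p : T.Path x y => p.val.length) this
    simp at hlen
  -- conclude
  refine ⟨c, ?_⟩
  by_contra hcon
  push_neg at hcon
  obtain ⟨g₀, hg₀⟩ := hcon
  set c' := g₀ • c with hc'
  have hc'r : r c' = r₀ := by rw [hc', hrinv]; exact hc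
  have hadj₀ : T.Adj c c' := hadj c c' hc hc'r (fun h => hg₀ h.symm)
  -- the central set is exactly {c, c'}
  have hC2 : ∀ z, r z = r₀ → z = c ∨ z = c' := by
    intro z hz
    by_contra hzz
    push_neg at hzz
    exact hnotri z c c' (hadj z c hz hc hzz.1) hadj₀ (hadj z c' hz hc'r hzz.2)
  -- g₀ • c' must be c, giving an inversion
  have hgc' : g₀ • c' = c := by
    have hrz : r (g₀ • c') = r₀ := by rw [hrinv]; exact hc'r
    rcases hC2 _ hrz with h | h
    · exact h
    · exfalso
      have : c' = c := by
        have := congrArg (fun w => g₀⁻¹ • w) h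
        simpa [hc'] using this
      exact hg₀ this
  exact hninv g₀ c c' hadj₀ ⟨rfl, hgc'⟩
end

section
/- Let W be a Coxeter group with two Coxeter generating sets S₁ and S₂ that are reflection-compatible (each element of S₁ is conjugate in W to an element of S₂). Then |S₁| = |S₂|. -/
set_option linter.unusedSectionVars false

namespace Stmt15

open Real CoxeterSystem

variable {B : Type*} [DecidableEq B]

/-- The cosine matrix entries of the standard bilinear form. -/
noncomputable def kk (M : CoxeterMatrix B) (i j : B) : ℝ :=
  if M i j = 0 then -1 else -Real.cos (Real.pi / (M i j : ℝ))

lemma kk_diag (M : CoxeterMatrix B) (i : B) : kk M i i = 1 := by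
  simp [kk, M.diagonal i]

lemma kk_symm (M : CoxeterMatrix B) (i j : B) : kk M j i = kk M i j := by
  rw [kk, kk, M.symmetric j i]

variable [Fintype B]

/-- The linear functional `v ↦ B(αᵢ, v)`. -/
noncomputable def cf (M : CoxeterMatrix B) (i : B) : (B → ℝ) →ₗ[ℝ] ℝ :=
  ∑ j, kk M i j • LinearMap.proj j

lemma cf_apply (M : CoxeterMatrix B) (i : B) (v : B → ℝ) :
    cf M i v = ∑ j, kk M i j * v j := by
  simp [cf]

lemma cf_single (M : CoxeterMatrix B) (i j : B) :
    cf M i (Pi.single j 1) = kk M i j := by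
  rw [cf_apply]
  rw [Finset.sum_eq_single j]
  · simp
  · intro b _ hb
    simp [Pi.single_apply, hb]
  · simp

/-- The simple reflection `σᵢ` of the standard geometric representation. -/
noncomputable def sig (M : CoxeterMatrix B) (i : B) : Module.End ℝ (B → ℝ) :=
  LinearMap.id - (2 : ℝ) • ((cf M i).smulRight (Pi.single i 1))

lemma sig_apply (M : CoxeterMatrix B) (i : B) (v : B → ℝ) :
    sig M i v = v - (2 * cf M i v) • (Pi.single i 1 : B → ℝ) := by
  simp [sig, mul_smul]

lemma cf_sig (M : CoxeterMatrix B) (i : B) (v : B → ℝ) :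
    cf M i (sig M i v) = -(cf M i v) := by
  rw [sig_apply, map_sub, map_smul, cf_single, kk_diag]
  simp; ring

lemma sig_invol (M : CoxeterMatrix B) (i : B) : sig M i * sig M i = 1 := by
  apply LinearMap.ext; intro v
  rw [Module.End.mul_apply, Module.End.one_apply]
  rw [sig_apply M i (sig M i v), cf_sig, sig_apply]
  module

/-- The trigonometric recurrence. -/
lemma sin_rec (θ x : ℝ) : Real.sin (x + 2*θ) = 2 * Real.cos θ * Real.sin (x + θ) - Real.sin x := by
  have h1 : x + 2*θ = (x+θ) + θ := by ring
  rw [h1, Real.sin_add, Real.sin_add, Real.cos_add]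
  linear_combination (-(Real.sin x)) * (Real.sin_sq_add_cos_sq θ)

section dihedral

variable (M : CoxeterMatrix B) (i j : B)

lemma sig_single_ji : sig M j (Pi.single i 1) =
    (Pi.single i 1 : B → ℝ) - (2 * kk M i j) • (Pi.single j 1 : B → ℝ) := by
  rw [sig_apply, cf_single, kk_symm]

lemma sig_single_jj : sig M j (Pi.single j 1) = -(Pi.single j 1 : B → ℝ) := by
  rw [sig_apply, cf_single, kk_diag]
  module

lemma sig_mul_single_i :
    (sig M i * sig M j) (Pi.single i 1) =
      (4 * (kk M i j)^2 - 1) • (Pi.single i 1 : B → ℝ)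
        + (-(2 * kk M i j)) • (Pi.single j 1 : B → ℝ) := by
  rw [Module.End.mul_apply, sig_single_ji, map_sub, map_smul, sig_single_jj M i,
    sig_apply, cf_single]
  module

lemma sig_mul_single_j :
    (sig M i * sig M j) (Pi.single j 1) =
      (2 * kk M i j) • (Pi.single i 1 : B → ℝ) + (-1 : ℝ) • (Pi.single j 1 : B → ℝ) := by
  rw [Module.End.mul_apply, sig_single_jj, map_neg, sig_single_ji M j i, kk_symm]
  module

end dihedral
/-! ### The coefficient recursion -/

/-- The sequence of coefficients of `(σᵢσⱼ)^n` applied to a basis vector. -/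
noncomputable def seq (k x0 y0 : ℝ) : ℕ → ℝ × ℝ
  | 0 => (x0, y0)
  | n+1 => ((4*k^2-1)*(seq k x0 y0 n).1 + 2*k*(seq k x0 y0 n).2,
      -(2*k)*(seq k x0 y0 n).1 - (seq k x0 y0 n).2)

lemma trig_u (θ : ℝ) (n : ℕ) :
    Real.sin θ * (seq (-Real.cos θ) 1 0 n).1 = Real.sin ((2*n+1)*θ) ∧
      Real.sin θ * (seq (-Real.cos θ) 1 0 n).2 = Real.sin (2*n*θ) := by
  induction n with
  | zero => norm_num [seq]
  | succ n ih =>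
    obtain ⟨ih1, ih2⟩ := ih
    constructor
    · show Real.sin θ * ((4*(-Real.cos θ)^2-1)*(seq (-Real.cos θ) 1 0 n).1
        + 2*(-Real.cos θ)*(seq (-Real.cos θ) 1 0 n).2) = _
      have A := sin_rec θ ((2*(n:ℝ)+1)*θ)
      have Bb := sin_rec θ (2*(n:ℝ)*θ)
      rw [show (2*(n:ℝ)+1)*θ + 2*θ = (2*(n:ℝ)+1)*θ + θ + θ by ring] at A
      rw [show (2*(n:ℝ)*θ) + 2*θ = (2*(n:ℝ)+1)*θ + θ by ring,
        show (2*(n:ℝ)*θ) + θ = (2*(n:ℝ)+1)*θ by ring] at Bb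
      rw [show (2*((n:ℕ)+1:ℕ)+1:ℝ)*θ = (2*(n:ℝ)+1)*θ + θ + θ by push_cast; ring]
      linear_combination -A - (2*Real.cos θ) * Bb + ((4*(Real.cos θ)^2-1)) * ih1
        - (2*Real.cos θ) * ih2
    · show Real.sin θ * (-(2*(-Real.cos θ))*(seq (-Real.cos θ) 1 0 n).1
        - (seq (-Real.cos θ) 1 0 n).2) = _
      have Bb := sin_rec θ (2*(n:ℝ)*θ)
      rw [show (2*(n:ℝ)*θ) + 2*θ = 2*((n:ℝ)+1)*θ by ring,
        show (2*(n:ℝ)*θ) + θ = (2*(n:ℝ)+1)*θ by ring] at Bb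
      rw [show (2*((n:ℕ)+1:ℕ):ℝ)*θ = 2*((n:ℝ)+1)*θ by push_cast; ring]
      linear_combination -Bb + (2*Real.cos θ) * ih1 - ih2

lemma trig_p (θ : ℝ) (n : ℕ) :
    Real.sin θ * (seq (-Real.cos θ) 0 1 n).1 = -Real.sin (2*n*θ) ∧
      Real.sin θ * (seq (-Real.cos θ) 0 1 n).2 = -Real.sin (2*n*θ - θ) := by
  induction n with
  | zero => norm_num [seq]
  | succ n ih =>
    obtain ⟨ih1, ih2⟩ := ih
    constructor
    · show Real.sin θ * ((4*(-Real.cos θ)^2-1)*(seq (-Real.cos θ) 0 1 n).1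
        + 2*(-Real.cos θ)*(seq (-Real.cos θ) 0 1 n).2) = _
      have A := sin_rec θ (2*(n:ℝ)*θ)
      have Bb := sin_rec θ (2*(n:ℝ)*θ - θ)
      rw [show (2*(n:ℝ)*θ) + 2*θ = 2*((n:ℝ)+1)*θ by ring,
        show (2*(n:ℝ)*θ) + θ = 2*(n:ℝ)*θ + θ by ring] at A
      rw [show (2*(n:ℝ)*θ - θ) + 2*θ = 2*(n:ℝ)*θ + θ by ring,
        show (2*(n:ℝ)*θ - θ) + θ = 2*(n:ℝ)*θ by ring] at Bb
      rw [show (2*((n:ℕ)+1:ℕ):ℝ)*θ = 2*((n:ℝ)+1)*θ by push_cast; ring]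
      linear_combination A + (2*Real.cos θ)*Bb + ((4*(Real.cos θ)^2-1)) * ih1
        - (2*Real.cos θ) * ih2
    · show Real.sin θ * (-(2*(-Real.cos θ))*(seq (-Real.cos θ) 0 1 n).1
        - (seq (-Real.cos θ) 0 1 n).2) = _
      have Bb := sin_rec θ (2*(n:ℝ)*θ - θ)
      rw [show (2*(n:ℝ)*θ - θ) + 2*θ = 2*((n:ℝ)+1)*θ - θ by ring,
        show (2*(n:ℝ)*θ - θ) + θ = 2*(n:ℝ)*θ by ring] at Bb
      rw [show (2*((n:ℕ)+1:ℕ):ℝ)*θ - θ = 2*((n:ℝ)+1)*θ - θ by push_cast; ring]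
      linear_combination Bb + (2*Real.cos θ) * ih1 - ih2
section dihedral2

variable (M : CoxeterMatrix B) (i j : B)

lemma pow_single (n : ℕ) :
    ((sig M i * sig M j)^n) (Pi.single i 1) =
      (seq (kk M i j) 1 0 n).1 • (Pi.single i 1 : B → ℝ)
        + (seq (kk M i j) 1 0 n).2 • (Pi.single j 1 : B → ℝ) ∧
    ((sig M i * sig M j)^n) (Pi.single j 1) =
      (seq (kk M i j) 0 1 n).1 • (Pi.single i 1 : B → ℝ)
        + (seq (kk M i j) 0 1 n).2 • (Pi.single j 1 : B → ℝ) := by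
  induction n with
  | zero => simp [seq]
  | succ n ih =>
    obtain ⟨ih1, ih2⟩ := ih
    constructor
    · rw [pow_succ', Module.End.mul_apply, ih1, map_add, map_smul, map_smul,
        sig_mul_single_i, sig_mul_single_j, seq]
      module
    · rw [pow_succ', Module.End.mul_apply, ih2, map_add, map_smul, map_smul,
        sig_mul_single_i, sig_mul_single_j, seq]
      module

lemma pow_fixes_orth (v : B → ℝ) (hi : cf M i v = 0) (hj : cf M j v = 0) (n : ℕ) :
    ((sig M i * sig M j)^n) v = v := by
  have h1 : (sig M i * sig M j) v = v := by
    rw [Module.End.mul_apply, sig_apply M j v, hj, mul_zero, zero_smul, sub_zero,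
      sig_apply M i v, hi, mul_zero, zero_smul, sub_zero]
  induction n with
  | zero => simp
  | succ n ih => rw [pow_succ, Module.End.mul_apply, h1, ih]

lemma pow_m_single (hij : i ≠ j) (hm : M i j ≠ 0) :
    ((sig M i * sig M j)^(M i j)) (Pi.single i 1) = Pi.single i 1 ∧
      ((sig M i * sig M j)^(M i j)) (Pi.single j 1) = Pi.single j 1 := by
  set m := M i j with hmdef
  have hm1 : m ≠ 1 := M.off_diagonal i j hij
  have hm2 : 2 ≤ m := by omega
  set θ : ℝ := Real.pi / m with hθ
  have hmpos : (0:ℝ) < m := by positivity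
  have hθpos : 0 < θ := by positivity
  have hθlt : θ < Real.pi := by
    rw [hθ, div_lt_iff₀ hmpos]
    have h2m : (2:ℝ) ≤ m := by exact_mod_cast hm2
    nlinarith [Real.pi_pos]
  have hsin : 0 < Real.sin θ := Real.sin_pos_of_pos_of_lt_pi hθpos hθlt
  have hk : kk M i j = -Real.cos θ := by
    rw [kk, if_neg hm, hθ]
  have hmθ : (m:ℝ) * θ = Real.pi := by
    rw [hθ]
    field_simp
  -- values of the sequences at n = m
  have hu := trig_u θ m
  have hp := trig_p θ m
  rw [show (2*(m:ℝ)+1)*θ = θ + 2*Real.pi by rw [← hmθ]; ring,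
    show 2*(m:ℝ)*θ = 2*Real.pi by rw [← hmθ]; ring] at hu
  rw [show 2*(m:ℝ)*θ = 2*Real.pi by rw [← hmθ]; ring,
    show 2*Real.pi - θ = -θ + 2*Real.pi by ring] at hp
  rw [Real.sin_add_two_pi, Real.sin_two_pi] at hu
  rw [Real.sin_two_pi, Real.sin_add_two_pi, Real.sin_neg] at hp
  have hsne : Real.sin θ ≠ 0 := ne_of_gt hsin
  have hu1 : (seq (kk M i j) 1 0 m).1 = 1 := by
    rw [hk]
    exact mul_left_cancel₀ hsne (by rw [mul_one]; exact hu.1)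
  have hu2 : (seq (kk M i j) 1 0 m).2 = 0 := by
    rw [hk]
    exact (mul_eq_zero.mp hu.2).resolve_left hsne
  have hp1 : (seq (kk M i j) 0 1 m).1 = 0 := by
    rw [hk]
    have h0 := hp.1
    rw [neg_zero] at h0
    exact (mul_eq_zero.mp h0).resolve_left hsne
  have hp2 : (seq (kk M i j) 0 1 m).2 = 1 := by
    rw [hk]
    refine mul_left_cancel₀ hsne ?_
    rw [mul_one, hp.2]
    ring
  obtain ⟨h1, h2⟩ := pow_single M i j m
  constructor
  · rw [h1, hu1, hu2]; module
  · rw [h2, hp1, hp2]; module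

end dihedral2
section liftable

variable (M : CoxeterMatrix B) (i j : B)

lemma kk_sq_lt_one (hij : i ≠ j) (hm : M i j ≠ 0) : (kk M i j)^2 < 1 := by
  have hm1 : M i j ≠ 1 := M.off_diagonal i j hij
  have hm2 : 2 ≤ M i j := by omega
  set θ : ℝ := Real.pi / (M i j) with hθ
  have hmpos : (0:ℝ) < M i j := by positivity
  have hθpos : 0 < θ := by positivity
  have hθlt : θ < Real.pi := by
    rw [hθ, div_lt_iff₀ hmpos]
    have h2m : (2:ℝ) ≤ M i j := by exact_mod_cast hm2
    nlinarith [Real.pi_pos]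
  have hsin : 0 < Real.sin θ := Real.sin_pos_of_pos_of_lt_pi hθpos hθlt
  have hk : kk M i j = -Real.cos θ := by rw [kk, if_neg hm]
  rw [hk]
  nlinarith [Real.sin_sq_add_cos_sq θ]

lemma sig_mul_pow_m (hij : i ≠ j) (hm : M i j ≠ 0) :
    (sig M i * sig M j) ^ (M i j) = 1 := by
  have hk2 : (kk M i j)^2 < 1 := kk_sq_lt_one M i j hij hm
  have hD : 1 - (kk M i j)^2 ≠ 0 := by nlinarith
  apply LinearMap.ext; intro v
  have hv : v = (v - ((cf M i v - kk M i j * cf M j v)/(1 - (kk M i j)^2)) • (Pi.single i 1 : B → ℝ)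
        - ((cf M j v - kk M i j * cf M i v)/(1 - (kk M i j)^2)) • (Pi.single j 1 : B → ℝ))
      + ((cf M i v - kk M i j * cf M j v)/(1 - (kk M i j)^2)) • (Pi.single i 1 : B → ℝ)
      + ((cf M j v - kk M i j * cf M i v)/(1 - (kk M i j)^2)) • (Pi.single j 1 : B → ℝ) := by
    abel
  have hcfi : cf M i (v - ((cf M i v - kk M i j * cf M j v)/(1 - (kk M i j)^2)) • (Pi.single i 1 : B → ℝ)
      - ((cf M j v - kk M i j * cf M i v)/(1 - (kk M i j)^2)) • (Pi.single j 1 : B → ℝ)) = 0 := by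
    rw [map_sub, map_sub, map_smul, map_smul, cf_single, cf_single, kk_diag]
    field_simp
    linear_combination (-(cf M i v)) * mul_inv_cancel₀ hD
  have hcfj : cf M j (v - ((cf M i v - kk M i j * cf M j v)/(1 - (kk M i j)^2)) • (Pi.single i 1 : B → ℝ)
      - ((cf M j v - kk M i j * cf M i v)/(1 - (kk M i j)^2)) • (Pi.single j 1 : B → ℝ)) = 0 := by
    rw [map_sub, map_sub, map_smul, map_smul, cf_single, cf_single, kk_diag, kk_symm M i j]
    field_simp
    linear_combination (-(cf M j v)) * mul_inv_cancel₀ hD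
  rw [Module.End.one_apply]
  conv_lhs => rw [hv]
  rw [map_add, map_add, map_smul, map_smul, pow_fixes_orth M i j _ hcfi hcfj,
    (pow_m_single M i j hij hm).1, (pow_m_single M i j hij hm).2]
  exact hv.symm

lemma isLiftable_sig (M : CoxeterMatrix B) : M.IsLiftable (sig M) := by
  intro i j
  by_cases hij : i = j
  · subst hij
    rw [M.diagonal i, pow_one, sig_invol]
  · by_cases hm : M i j = 0
    · rw [hm, pow_zero]
    · exact sig_mul_pow_m M i j hij hm

end liftable
section key

variable {W : Type*} [Group W]

/-- The standard geometric representation of a Coxeter system. -/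
noncomputable def rep {B : Type*} [DecidableEq B] [Fintype B] {M : CoxeterMatrix B}
    (cs : CoxeterSystem M W) : W →* Module.End ℝ (B → ℝ) :=
  cs.lift ⟨sig M, isLiftable_sig M⟩

lemma rep_simple {B : Type*} [DecidableEq B] [Fintype B] {M : CoxeterMatrix B}
    (cs : CoxeterSystem M W) (i : B) : rep cs (cs.simple i) = sig M i :=
  cs.lift_apply_simple _ i

theorem card_le {B B' : Type*} [Fintype B] [Fintype B']
    {M : CoxeterMatrix B} {M' : CoxeterMatrix B'}
    (cs : CoxeterSystem M W) (cs' : CoxeterSystem M' W)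
    (h : ∀ i : B', ∃ j : B, IsConj (cs.simple j) (cs'.simple i)) :
    Fintype.card B ≤ Fintype.card B' := by
  classical
  have h' : ∀ i : B', ∃ jw : B × W, jw.2 * cs.simple jw.1 * jw.2⁻¹ = cs'.simple i := by
    intro i
    obtain ⟨j, hj⟩ := h i
    obtain ⟨w, hw⟩ := isConj_iff.mp hj
    exact ⟨⟨j, w⟩, hw⟩
  choose jw hjw using h'
  set β : B' → (B → ℝ) := fun i => rep cs (jw i).2 (Pi.single (jw i).1 1) with hβ
  set U : Submodule ℝ (B → ℝ) := Submodule.span ℝ (Set.range β) with hU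
  have hβU : ∀ i : B', β i ∈ U := fun i => Submodule.subset_span ⟨i, rfl⟩
  have hwu : ∀ (w : W) (x : B → ℝ), rep cs w (rep cs w⁻¹ x) = x := by
    intro w x
    rw [← Module.End.mul_apply, ← map_mul, mul_inv_cancel, map_one, Module.End.one_apply]
  have hrep : ∀ (i : B') (v : B → ℝ), rep cs (cs'.simple i) v
      = v - (2 * cf M (jw i).1 (rep cs ((jw i).2)⁻¹ v)) • β i := by
    intro i v
    conv_lhs => rw [← hjw i]
    rw [map_mul, map_mul, Module.End.mul_apply, Module.End.mul_apply, rep_simple,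
      sig_apply, map_sub, map_smul, hwu]
  have main : ∀ g : W, (∀ v, rep cs g v - v ∈ U) ∧ (∀ v, v ∈ U → rep cs g v ∈ U) := by
    intro g
    refine cs'.simple_induction
      (p := fun g => (∀ v, rep cs g v - v ∈ U) ∧ (∀ v, v ∈ U → rep cs g v ∈ U))
      g (fun i => ⟨fun v => ?_, fun v hv => ?_⟩)
      ⟨fun v => ?_, fun v hv => ?_⟩ (fun w w' hw hw' => ⟨fun v => ?_, fun v hv => ?_⟩)
    · rw [hrep, sub_sub_cancel_left]
      exact neg_mem (U.smul_mem _ (hβU i))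
    · rw [hrep]
      exact sub_mem hv (U.smul_mem _ (hβU i))
    · rw [map_one, Module.End.one_apply, sub_self]
      exact U.zero_mem
    · rwa [map_one, Module.End.one_apply]
    · rw [map_mul, Module.End.mul_apply]
      have h2 : rep cs w (rep cs w' v) - v
          = (rep cs w (rep cs w' v) - rep cs w' v) + (rep cs w' v - v) := by abel
      rw [h2]
      exact add_mem (hw.1 _) (hw'.1 v)
    · rw [map_mul, Module.End.mul_apply]
      exact hw.2 _ (hw'.2 v hv)
  have hdelta : ∀ jb : B, (Pi.single jb 1 : B → ℝ) ∈ U := by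
    intro jb
    have h1 := (main (cs.simple jb)).1 (Pi.single jb 1)
    rw [rep_simple, sig_single_jj] at h1
    have h2 : (-(2:ℝ)) • (Pi.single jb 1 : B → ℝ) ∈ U := by
      convert h1 using 1
      module
    have h3 := U.smul_mem (-(1/2) : ℝ) h2
    rwa [smul_smul, show (-(1/2):ℝ) * (-2) = 1 by norm_num, one_smul] at h3
  have hUtop : U = ⊤ := by
    rw [eq_top_iff]
    intro v _
    have hv : v = ∑ jb, v jb • (Pi.single jb 1 : B → ℝ) := by
      ext x
      simp [Pi.single_apply]
    rw [hv]
    exact Submodule.sum_mem U (fun jb _ => U.smul_mem _ (hdelta jb))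
  calc Fintype.card B = Module.finrank ℝ (B → ℝ) := (Module.finrank_pi ℝ).symm
    _ = Module.finrank ℝ U := by rw [hUtop, finrank_top]
    _ ≤ Fintype.card B' := by
        rw [hU]
        simpa [Set.finrank] using finrank_range_le_card (R := ℝ) β

end key
section symm

variable {W : Type*} [Group W]

lemma isConj_simple_of_odd {B : Type*} {M : CoxeterMatrix B} (cs : CoxeterSystem M W)
    {i j : B} (h : Odd (M i j)) : IsConj (cs.simple i) (cs.simple j) := by
  obtain ⟨q, hq⟩ := h
  have hab : (cs.simple i * cs.simple j) ^ (2*q+1) = 1 := by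
    rw [← hq]; exact cs.simple_mul_simple_pow i j
  rw [isConj_iff]
  refine ⟨(cs.simple i * cs.simple j) ^ q, ?_⟩
  have hsc : SemiconjBy (cs.simple i) ((cs.simple j * cs.simple i) ^ q)
      ((cs.simple i * cs.simple j) ^ q) :=
    SemiconjBy.pow_right (mul_assoc _ _ _).symm q
  have hinv : ((cs.simple i * cs.simple j) ^ q)⁻¹ = (cs.simple j * cs.simple i) ^ q := by
    rw [← inv_pow, mul_inv_rev, cs.inv_simple, cs.inv_simple]
  rw [hinv, mul_assoc, hsc.eq, ← mul_assoc, ← pow_add]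
  have h2 : (cs.simple i * cs.simple j) ^ (q+q) * (cs.simple i * cs.simple j) = 1 := by
    rw [← pow_succ, show q+q+1 = 2*q+1 by ring]
    exact hab
  have h3 : (cs.simple i * cs.simple j) ^ (q+q) = (cs.simple i * cs.simple j)⁻¹ :=
    eq_inv_of_mul_eq_one_left h2
  rw [h3, mul_inv_rev, cs.inv_simple, cs.inv_simple]
  exact cs.simple_mul_simple_cancel_right i

lemma compat_symm {B₁ B₂ : Type*} {M₁ : CoxeterMatrix B₁} {M₂ : CoxeterMatrix B₂}
    (cs₁ : CoxeterSystem M₁ W) (cs₂ : CoxeterSystem M₂ W)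
    (hcompat : ∀ i : B₁, ∃ j : B₂, IsConj (cs₁.simple i) (cs₂.simple j)) :
    ∀ j : B₂, ∃ i : B₁, IsConj (cs₂.simple j) (cs₁.simple i) := by
  intro j₀
  by_contra hno
  push_neg at hno
  classical
  set f : B₂ → ℤˣ := fun j => if IsConj (cs₂.simple j₀) (cs₂.simple j) then (-1 : ℤˣ) else 1
    with hfdef
  have hf : M₂.IsLiftable f := by
    intro j j'
    rcases Nat.even_or_odd (M₂ j j') with he | ho
    · obtain ⟨k, hk⟩ := he
      rw [hk, ← two_mul, pow_mul, pow_two, Int.units_mul_self, one_pow]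
    · have hco := isConj_simple_of_odd cs₂ ho
      have hiff : IsConj (cs₂.simple j₀) (cs₂.simple j)
          ↔ IsConj (cs₂.simple j₀) (cs₂.simple j') :=
        ⟨fun h => h.trans hco, fun h => h.trans hco.symm⟩
      by_cases hc : IsConj (cs₂.simple j₀) (cs₂.simple j)
      · rw [hfdef]
        simp only [if_pos hc, if_pos (hiff.mp hc)]
        rw [show ((-1 : ℤˣ) * (-1)) = 1 by simp, one_pow]
      · rw [hfdef]
        simp only [if_neg hc, if_neg (fun h => hc (hiff.mpr h))]
        rw [one_mul, one_pow]
  set ε : W →* ℤˣ := cs₂.lift ⟨f, hf⟩ with hε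
  have hone : ∀ i : B₁, ε (cs₁.simple i) = 1 := by
    intro i
    obtain ⟨j, hj⟩ := hcompat i
    have h1 : ε (cs₁.simple i) = ε (cs₂.simple j) := isConj_iff_eq.mp (ε.map_isConj hj)
    rw [h1, hε, cs₂.lift_apply_simple, hfdef]
    refine if_neg (fun h => hno i ?_)
    exact h.trans hj.symm
  have hεtriv : ε = 1 := by
    refine cs₁.ext_simple (fun i => ?_)
    rw [hone i]
    rfl
  have hbad : ε (cs₂.simple j₀) = -1 := by
    rw [hε, cs₂.lift_apply_simple, hfdef]
    exact if_pos (IsConj.refl _)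
  rw [hεtriv, MonoidHom.one_apply] at hbad
  exact absurd hbad (by decide)

end symm

end Stmt15

/-- Two reflection-compatible Coxeter generating sets of the same group have the same
cardinality. -/
theorem stmt_15 {W : Type*} [Group W] {B₁ B₂ : Type*} [Fintype B₁] [Fintype B₂]
    {M₁ : CoxeterMatrix B₁} {M₂ : CoxeterMatrix B₂}
    (cs₁ : CoxeterSystem M₁ W) (cs₂ : CoxeterSystem M₂ W)
    (hcompat : ∀ i : B₁, ∃ j : B₂, IsConj (cs₁.simple i) (cs₂.simple j)) :
    Fintype.card B₁ = Fintype.card B₂ := by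
  have h1 : Fintype.card B₂ ≤ Fintype.card B₁ :=
    Stmt15.card_le cs₂ cs₁ (fun i => by
      obtain ⟨j, hj⟩ := hcompat i
      exact ⟨j, hj.symm⟩)
  have h2 : Fintype.card B₁ ≤ Fintype.card B₂ :=
    Stmt15.card_le cs₁ cs₂ (fun j => by
      obtain ⟨i, hi⟩ := Stmt15.compat_symm cs₁ cs₂ hcompat j
      exact ⟨i, hi.symm⟩)
  omega
end

section
/- Let (W, S) be a Coxeter system and J ⊆ S a subset that is irreducible (for no nonempty proper I ⊊ J does J ⊆ I ∪ I^⊥) but not 2-spherical (some pair in J generates an infinite subgroup). If |J| > 2, then there exists s ∈ J such that J \ {s} is still irreducible and not 2-spherical. -/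
/-- A subset `J` of the index set of a Coxeter matrix is irreducible if for no nonempty
proper subset `I ⊊ J` does every element of `J \ I` commute with every element of `I`. -/
def FinsetIrreducible {B : Type*} (M : CoxeterMatrix B) (J : Finset B) : Prop :=
  ∀ I : Finset B, I ⊆ J → I.Nonempty → I ≠ J →
    ∃ j ∈ J, j ∉ I ∧ ∃ i ∈ I, M j i ≠ 2

/-- A subset `J` is 2-spherical if every pair of its elements generates a finite subgroup,
i.e., every product of two simple reflections from `J` has finite order. -/
def TwoSpherical {B W : Type*} [Group W] {M : CoxeterMatrix B}
    (cs : CoxeterSystem M W) (J : Finset B) : Prop :=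
  ∀ i ∈ J, ∀ j ∈ J, IsOfFinOrder (cs.simple i * cs.simple j)

open Relation

/-- Adjacency within a finset: distinct vertices of `J` with `M u v ≠ 2`. -/
def CoxAdj {B : Type*} (M : CoxeterMatrix B) (J : Finset B) (u v : B) : Prop :=
  u ∈ J ∧ v ∈ J ∧ u ≠ v ∧ M u v ≠ 2

theorem coxAdj_symm {B : Type*} (M : CoxeterMatrix B) (J : Finset B) :
    Symmetric (CoxAdj M J) := by
  rintro u v ⟨hu, hv, hne, hM⟩
  exact ⟨hv, hu, hne.symm, by rwa [M.symmetric]⟩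

/-- Reachability within a finset. -/
def CoxReach {B : Type*} (M : CoxeterMatrix B) (J : Finset B) : B → B → Prop :=
  ReflTransGen (CoxAdj M J)

theorem coxReach_of_irreducible {B : Type*} [DecidableEq B] {M : CoxeterMatrix B}
    {J : Finset B} (hirr : FinsetIrreducible M J) {a b : B} (ha : a ∈ J) (hb : b ∈ J) :
    CoxReach M J a b := by
  classical
  set R : Finset B := J.filter (fun v => CoxReach M J a v) with hR
  have hsub : R ⊆ J := Finset.filter_subset _ _
  have haR : a ∈ R := Finset.mem_filter.2 ⟨ha, ReflTransGen.refl⟩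
  by_cases heq : R = J
  · have := heq ▸ hb
    exact (Finset.mem_filter.1 this).2
  · obtain ⟨j, hjJ, hjR, i, hiR, hMji⟩ := hirr R hsub ⟨a, haR⟩ heq
    obtain ⟨hiJ, hreach⟩ := Finset.mem_filter.1 hiR
    have hne : i ≠ j := fun h => hjR (h ▸ hiR)
    have hadj : CoxAdj M J i j := ⟨hiJ, hjJ, hne, by rwa [M.symmetric]⟩
    exact absurd (Finset.mem_filter.2 ⟨hjJ, hreach.tail hadj⟩) hjR

theorem irreducible_of_coxReach {B : Type*} {M : CoxeterMatrix B} {J : Finset B}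
    (hconn : ∀ a ∈ J, ∀ b ∈ J, CoxReach M J a b) : FinsetIrreducible M J := by
  intro I hIJ hne hneq
  obtain ⟨i0, hi0⟩ := hne
  have hss : I ⊂ J := lt_of_le_of_ne hIJ hneq
  obtain ⟨j0, hj0J, hj0I⟩ := Finset.exists_of_ssubset hss
  have hreach := hconn i0 (hIJ hi0) j0 hj0J
  have aux : ∀ b, CoxReach M J i0 b →
      b ∈ I ∨ ∃ j ∈ J, j ∉ I ∧ ∃ i ∈ I, M j i ≠ 2 := by
    intro b h
    induction h with
    | refl => exact Or.inl hi0
    | tail hcb hadj ih =>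
      rename_i c b'
      rcases ih with hc | hdone
      · by_cases hbI : b' ∈ I
        · exact Or.inl hbI
        · obtain ⟨hcJ, hbJ, hnecb, hM⟩ := hadj
          exact Or.inr ⟨b', hbJ, hbI, c, hc, by rwa [M.symmetric]⟩
      · exact Or.inr hdone
  rcases aux j0 hreach with h | h
  · exact absurd h hj0I
  · exact h

/-- Paths of length `n` from `a` within `J`. -/
def CoxPathN {B : Type*} (M : CoxeterMatrix B) (J : Finset B) (a : B) : ℕ → B → Prop
  | 0, v => v = a
  | n + 1, v => ∃ u, CoxPathN M J a n u ∧ CoxAdj M J u v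

theorem coxPathN_of_reach {B : Type*} {M : CoxeterMatrix B} {J : Finset B} {a v : B}
    (h : CoxReach M J a v) : ∃ n, CoxPathN M J a n v := by
  induction h with
  | refl => exact ⟨0, rfl⟩
  | tail _ hadj ih => obtain ⟨n, hn⟩ := ih; exact ⟨n + 1, _, hn, hadj⟩

/-- If `J` is irreducible and not 2-spherical with `|J| > 2`, then some `s ∈ J` can be removed
so that `J \ {s}` is still irreducible and not 2-spherical. -/
theorem stmt_17 {B W : Type*} [Group W] [DecidableEq B]
    {M : CoxeterMatrix B} (cs : CoxeterSystem M W)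
    (J : Finset B) (hirr : FinsetIrreducible M J) (hns : ¬ TwoSpherical cs J)
    (hcard : 2 < J.card) :
    ∃ s ∈ J, FinsetIrreducible M (J.erase s) ∧ ¬ TwoSpherical cs (J.erase s) := by
  classical
  -- extract the infinite pair
  simp only [TwoSpherical, not_forall] at hns
  obtain ⟨a, ha, b, hb, hfin⟩ := hns
  have hab : a ≠ b := by
    rintro rfl
    exact hfin (by rw [cs.simple_mul_simple_self]; exact IsOfFinOrder.one)
  have hMab : M a b ≠ 2 := by
    intro h
    exact hfin (isOfFinOrder_iff_pow_eq_one.2 ⟨2, two_pos, by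
      have := cs.simple_mul_simple_pow a b; rwa [h] at this⟩)
  -- everything in J is reachable from a
  have hpath : ∀ v ∈ J, ∃ n, CoxPathN M J a n v := fun v hv =>
    coxPathN_of_reach (coxReach_of_irreducible hirr ha hv)
  -- distance from a
  let d : B → ℕ := fun v => if h : ∃ n, CoxPathN M J a n v then Nat.find h else 0
  have hPdv : ∀ v ∈ J, CoxPathN M J a (d v) v := by
    intro v hv
    have h := hpath v hv
    simp only [d, dif_pos h]
    exact Nat.find_spec h
  have hdle : ∀ v ∈ J, ∀ n, CoxPathN M J a n v → d v ≤ n := by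
    intro v hv n hn
    have h := hpath v hv
    simp only [d, dif_pos h]
    exact Nat.find_min' h hn
  -- choose s in J \ {a, b} of maximal distance
  set T : Finset B := (J.erase a).erase b with hT
  have hTsub : T ⊆ J := (Finset.erase_subset _ _).trans (Finset.erase_subset _ _)
  have hTne : T.Nonempty := by
    rw [← Finset.card_pos, hT, Finset.card_erase_of_mem
      (Finset.mem_erase.2 ⟨hab.symm, hb⟩), Finset.card_erase_of_mem ha]
    omega
  obtain ⟨s, hsT, hsmax⟩ := Finset.exists_max_image T d hTne
  have hsJ : s ∈ J := hTsub hsT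
  have hsa : s ≠ a := (Finset.mem_erase.1 (Finset.mem_erase.1 hsT).2).1
  have hsb : s ≠ b := (Finset.mem_erase.1 hsT).1
  have haE : a ∈ J.erase s := Finset.mem_erase.2 ⟨fun h => hsa h.symm, ha⟩
  have hbE : b ∈ J.erase s := Finset.mem_erase.2 ⟨fun h => hsb h.symm, hb⟩
  have hadjab : CoxAdj M (J.erase s) a b := ⟨haE, hbE, hab, hMab⟩
  -- connectivity of J.erase s
  have key : ∀ n, ∀ v ∈ J.erase s, d v ≤ n → CoxReach M (J.erase s) a v := by
    intro n
    induction n with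
    | zero =>
      intro v hv hdv
      have hvJ : v ∈ J := Finset.mem_of_mem_erase hv
      have := hPdv v hvJ
      rw [Nat.le_zero.1 hdv] at this
      rw [show v = a from this]
      exact ReflTransGen.refl
    | succ n ih =>
      intro v hv hdv
      by_cases hva : v = a
      · rw [hva]; exact ReflTransGen.refl
      by_cases hvb : v = b
      · rw [hvb]; exact ReflTransGen.single hadjab
      have hvJ : v ∈ J := Finset.mem_of_mem_erase hv
      have hvs : v ≠ s := (Finset.mem_erase.1 hv).1
      have hvT : v ∈ T := Finset.mem_erase.2 ⟨hvb, Finset.mem_erase.2 ⟨hva, hvJ⟩⟩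
      have hP := hPdv v hvJ
      have hdpos : 0 < d v := by
        rcases Nat.eq_zero_or_pos (d v) with h | h
        · rw [h] at hP; exact absurd hP hva
        · exact h
      obtain ⟨k, hk⟩ : ∃ k, d v = k + 1 := ⟨d v - 1, by omega⟩
      rw [hk] at hP
      obtain ⟨u, hu, huv⟩ := hP
      have huJ : u ∈ J := huv.1
      have hduk : d u ≤ k := hdle u huJ k hu
      have hus : u ≠ s := by
        rintro rfl
        have h1 : d v ≤ d u := hsmax v hvT
        omega
      have huE : u ∈ J.erase s := Finset.mem_erase.2 ⟨hus, huJ⟩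
      have hreachu : CoxReach M (J.erase s) a u := ih u huE (by omega)
      exact hreachu.tail ⟨huE, hv, huv.2.2.1, huv.2.2.2⟩
  have hconn : ∀ x ∈ J.erase s, ∀ y ∈ J.erase s, CoxReach M (J.erase s) x y := by
    intro x hx y hy
    have h1 : CoxReach M (J.erase s) a x := key (d x) x hx le_rfl
    have h2 : CoxReach M (J.erase s) a y := key (d y) y hy le_rfl
    haveI : Std.Symm (CoxAdj M (J.erase s)) := ⟨fun x y h => coxAdj_symm M _ h⟩
    exact ((Std.Symm.symm (r := ReflTransGen (CoxAdj M (J.erase s))) _ _ h1)).trans h2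
  refine ⟨s, hsJ, irreducible_of_coxReach hconn, ?_⟩
  intro h2s
  exact hfin (h2s a haE b hbE)
end

section
/- Let W be a finitely generated Coxeter group with Coxeter generating set S, and let α be an automorphism of W such that α(S) = S (a graph automorphism). If α maps every standard parabolic subgroup W_J (J ⊆ S) to a conjugate of itself, and S is irreducible and non-spherical, then α is the identity on S (hence α is inner, indeed trivial as a graph automorphism). -/
/-- The standard parabolic subgroup of a Coxeter system on the subset `J` of the
index set. -/
def stdParabolic {B W : Type*} [Group W] {M : CoxeterMatrix B}
    (cs : CoxeterSystem M W) (J : Set B) : Subgroup W :=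
  Subgroup.closure (cs.simple '' J)

/-- A Coxeter matrix is irreducible if the index set does not split into two nonempty
pairwise-commuting parts. -/
def CoxIrreducible {B : Type*} (M : CoxeterMatrix B) : Prop :=
  ∀ I : Set B, (∀ i ∈ I, ∀ j ∉ I, M i j = 2) → I = ∅ ∨ I = Set.univ

open Real CoxeterSystem
set_option linter.unusedSectionVars false
set_option maxHeartbeats 1000000

namespace CoxRigid

section Rep

variable {B : Type*} [Fintype B] [DecidableEq B] (M : CoxeterMatrix B)

/-- cosine matrix entry: B(e_i, e_j) -/
noncomputable def km (i j : B) : ℝ :=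
  if M i j = 0 then -1 else -Real.cos (Real.pi / (M i j))

lemma km_symm (i j : B) : km M i j = km M j i := by
  unfold km; rw [M.symmetric i j]

lemma km_diag (i : B) : km M i i = 1 := by
  unfold km
  rw [if_neg (by simp [M.diagonal i])]
  simp [M.diagonal i]

lemma two_le_M {i j : B} (hij : i ≠ j) (h0 : M i j ≠ 0) : 2 ≤ M i j := by
  have h1 := M.off_diagonal i j hij
  omega

lemma km_nonpos {i j : B} (hij : i ≠ j) : km M i j ≤ 0 := by
  unfold km
  split
  · norm_num
  · rename_i h0
    have h2 : 2 ≤ M i j := two_le_M M hij h0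
    have h2' : (2:ℝ) ≤ (M i j : ℝ) := by exact_mod_cast h2
    have hcos : 0 ≤ Real.cos (Real.pi / (M i j)) := by
      apply Real.cos_nonneg_of_mem_Icc
      constructor
      · have : (0:ℝ) ≤ Real.pi / (M i j : ℝ) := div_nonneg (le_of_lt Real.pi_pos) (by linarith)
        linarith [Real.pi_pos]
      · rw [div_le_div_iff₀ (by linarith [Real.pi_pos]) (by norm_num : (0:ℝ) < 2)]
        nlinarith [Real.pi_pos]
    linarith

lemma km_neg_of_ne_two {i j : B} (hij : i ≠ j) (h2 : M i j ≠ 2) : km M i j < 0 := by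
  unfold km
  split
  · norm_num
  · rename_i h0
    have h3 : 3 ≤ M i j := by have := M.off_diagonal i j hij; omega
    have h3' : (3:ℝ) ≤ (M i j : ℝ) := by exact_mod_cast h3
    have hcos : 0 < Real.cos (Real.pi / (M i j)) := by
      apply Real.cos_pos_of_mem_Ioo
      constructor
      · have : 0 < Real.pi / (M i j : ℝ) := by positivity
        linarith [Real.pi_pos]
      · rw [div_lt_div_iff₀ (by linarith) (by norm_num : (0:ℝ) < 2)]
        nlinarith [Real.pi_pos]
    linarith

lemma M_eq_two_of_km_eq_zero {i j : B} (hij : i ≠ j) (h : km M i j = 0) : M i j = 2 := by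
  by_contra h2
  exact absurd h (ne_of_lt (km_neg_of_ne_two M hij h2))

/-- basis vector -/
noncomputable def ee (i : B) : B → ℝ := Pi.single i 1

lemma ee_apply (i b : B) : ee i b = if b = i then 1 else 0 := by
  unfold ee; rw [Pi.single_apply]

lemma ee_self (i : B) : ee i i = (1:ℝ) := by simp [ee_apply]

/-- pairing with e_i -/
noncomputable def bfi (i : B) (x : B → ℝ) : ℝ := ∑ b, x b * km M i b

lemma bfi_add (i : B) (x y : B → ℝ) : bfi M i (x + y) = bfi M i x + bfi M i y := by
  unfold bfi
  rw [← Finset.sum_add_distrib]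
  congr 1; ext b; simp [add_mul]

lemma bfi_smul (i : B) (c : ℝ) (x : B → ℝ) : bfi M i (c • x) = c * bfi M i x := by
  unfold bfi
  rw [Finset.mul_sum]
  congr 1; ext b; simp [mul_assoc]

lemma bfi_sub (i : B) (x y : B → ℝ) : bfi M i (x - y) = bfi M i x - bfi M i y := by
  unfold bfi
  rw [← Finset.sum_sub_distrib]
  congr 1; ext b; simp [sub_mul]

lemma bfi_ee (i j : B) : bfi M i (ee j) = km M i j := by
  unfold bfi
  rw [Finset.sum_eq_single j]
  · simp [ee_self]
  · intro b _ hb; simp [ee_apply, hb]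
  · intro h; exact absurd (Finset.mem_univ j) h

/-- the reflection attached to i -/
noncomputable def refl (i : B) : Module.End ℝ (B → ℝ) where
  toFun x := x - (2 * bfi M i x) • ee i
  map_add' x y := by
    rw [bfi_add]; ext b; simp; ring
  map_smul' c x := by
    rw [bfi_smul]; ext b; simp; ring

lemma refl_apply (i : B) (x : B → ℝ) : refl M i x = x - (2 * bfi M i x) • ee i := rfl

lemma bfi_refl (i : B) (x : B → ℝ) : bfi M i (refl M i x) = -(bfi M i x) := by
  rw [refl_apply, bfi_sub, bfi_smul, bfi_ee, km_diag]; ring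

lemma refl_refl (i : B) (x : B → ℝ) : refl M i (refl M i x) = x := by
  rw [refl_apply (x := refl M i x), bfi_refl, refl_apply]
  ext b; simp

lemma refl_ee_self (i : B) : refl M i (ee i) = -(ee i) := by
  rw [refl_apply, bfi_ee, km_diag]
  ext b; simp; ring

lemma refl_of_orth {i : B} {x : B → ℝ} (h : bfi M i x = 0) : refl M i x = x := by
  rw [refl_apply, h]; ext b; simp

lemma bfi_combo2 (t i j : B) (a b : ℝ) :
    bfi M t (a • ee i + b • ee j) = a * km M t i + b * km M t j := by
  rw [bfi_add, bfi_smul, bfi_smul, bfi_ee, bfi_ee]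

end Rep

end CoxRigid

namespace CoxRigid

section Lift

variable {B : Type*} [Fintype B] [DecidableEq B] (M : CoxeterMatrix B)

lemma refl_span_i {i j : B} {c : ℝ} (hkm : km M i j = -c) (a b : ℝ) :
    refl M i (a • ee i + b • ee j) = (2*c*b - a) • ee i + b • ee j := by
  rw [refl_apply, bfi_combo2, km_diag, hkm]
  module

lemma refl_span_j {i j : B} {c : ℝ} (hkm : km M i j = -c) (a b : ℝ) :
    refl M j (a • ee i + b • ee j) = a • ee i + (2*c*a - b) • ee j := by
  rw [refl_apply, bfi_combo2, km_diag, km_symm, hkm]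
  module

theorem refl_liftable : M.IsLiftable (fun i => (refl M i : Module.End ℝ (B → ℝ))) := by
  intro i j
  by_cases hij : i = j
  · subst hij
    rw [M.diagonal i, pow_one]
    exact LinearMap.ext fun x => refl_refl M i x
  by_cases hm0 : M i j = 0
  · rw [hm0, pow_zero]
  have h2 : 2 ≤ M i j := two_le_M M hij hm0
  have h2' : (2:ℝ) ≤ (M i j : ℝ) := by exact_mod_cast h2
  set m := M i j with hm
  set θ : ℝ := Real.pi / m with hθ
  have hθpos : 0 < θ := by
    apply div_pos Real.pi_pos; linarith
  have hθle : θ ≤ Real.pi / 2 := by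
    rw [hθ, div_le_div_iff₀ (by linarith) (by norm_num)]
    nlinarith [Real.pi_pos]
  set c : ℝ := Real.cos θ with hc
  set s : ℝ := Real.sin θ with hs
  have hkm : km M i j = -c := by
    unfold km; rw [if_neg hm0]
  have hsin : 0 < s := Real.sin_pos_of_pos_of_lt_pi hθpos (by linarith [Real.pi_pos])
  have hsc : s^2 + c^2 = 1 := Real.sin_sq_add_cos_sq θ
  set ω : ℂ := Complex.exp (θ * Complex.I) with hω
  have hωval : ω = (c:ℂ) + (s : ℂ) * Complex.I := by
    rw [hω, Complex.exp_mul_I, Complex.ofReal_cos, Complex.ofReal_sin]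
  have hI : (Complex.I:ℂ)^2 = -1 := Complex.I_sq
  have hsc' : (s:ℂ)^2 + (c:ℂ)^2 = 1 := by exact_mod_cast hsc
  have hkey : ω^2 = 2*(c:ℂ)*ω - 1 := by
    rw [hωval]
    linear_combination (s:ℂ)^2 * hI - hsc'
  have hωpow : ω^(2*m) = 1 := by
    rw [hω, ← Complex.exp_nat_mul]
    have hmne : (m:ℂ) ≠ 0 := by
      exact_mod_cast (by omega : m ≠ 0)
    have : ((2*m : ℕ):ℂ) * ((θ:ℂ) * Complex.I) = 2*(Real.pi:ℂ)*Complex.I := by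
      rw [hθ]
      push_cast
      field_simp
    rw [this, Complex.exp_two_pi_mul_I]
  have hstep : ∀ a b : ℝ, ((refl M i) * (refl M j)) (a • ee i + b • ee j)
      = ((4*c^2-1)*a - 2*c*b) • ee i + (2*c*a - b) • ee j := by
    intro a b
    rw [Module.End.mul_apply, refl_span_j M hkm, refl_span_i M hkm]
    module
  have hmain : ∀ (a b : ℝ) (n : ℕ), ∃ A Bb : ℝ,
      (((refl M i) * (refl M j))^n) (a • ee i + b • ee j) = A • ee i + Bb • ee j
      ∧ (A:ℂ) * ω - Bb = ω^(2*n) * ((a:ℂ)*ω - b) := by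
    intro a b n
    induction n with
    | zero => exact ⟨a, b, by simp, by simp⟩
    | succ n ih =>
      obtain ⟨A, Bb, h1, h2⟩ := ih
      refine ⟨(4*c^2-1)*A - 2*c*Bb, 2*c*A - Bb, ?_, ?_⟩
      · rw [pow_succ', Module.End.mul_apply, h1, hstep]
      · push_cast
        linear_combination ((-(A:ℂ))*ω + (Bb:ℂ) - 2*(c:ℂ)*(A:ℂ)) * hkey + ω^2 * h2
  -- now the full statement
  apply LinearMap.ext
  intro x
  show (((refl M i) * (refl M j))^m) x = x
  have hD : (0:ℝ) < 1 - c^2 := by nlinarith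
  set p := bfi M i x with hp
  set q := bfi M j x with hq
  set a := (p + c*q)/(1 - c^2) with ha
  set b := (q + c*p)/(1 - c^2) with hb
  set y := x - a • ee i - b • ee j with hy
  have hcombo : bfi M i (a • ee i + b • ee j) = a - c * b := by
    rw [bfi_combo2, km_diag, hkm]; ring
  have hcombo' : bfi M j (a • ee i + b • ee j) = b - c * a := by
    rw [bfi_combo2, km_diag, km_symm, hkm]; ring
  have hab : a - c * b = p ∧ b - c * a = q := by
    constructor
    · rw [ha, hb]; field_simp; ring
    · rw [ha, hb]; field_simp; ring
  have hyi : bfi M i y = 0 := by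
    have : y = x - (a • ee i + b • ee j) := by rw [hy]; module
    rw [this, bfi_sub, hcombo, hab.1]
    ring
  have hyj : bfi M j y = 0 := by
    have : y = x - (a • ee i + b • ee j) := by rw [hy]; module
    rw [this, bfi_sub, hcombo', hab.2]
    ring
  have hfix : ∀ n : ℕ, (((refl M i) * (refl M j))^n) y = y := by
    intro n
    induction n with
    | zero => simp
    | succ n ih =>
      rw [pow_succ', Module.End.mul_apply, ih, Module.End.mul_apply,
        refl_of_orth M hyj, refl_of_orth M hyi]
  obtain ⟨A, Bb, h1, h2⟩ := hmain a b m
  rw [hωpow, one_mul] at h2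
  have hA : A = a ∧ Bb = b := by
    have him := congrArg Complex.im h2
    have hre := congrArg Complex.re h2
    rw [hωval] at him hre
    simp at him hre
    have hA : A = a := by
      rcases him with h | h
      · exact h
      · exact absurd h (by linarith)
    refine ⟨hA, ?_⟩
    rw [hA] at hre
    linarith
  rw [hA.1, hA.2] at h1
  have hx : x = (a • ee i + b • ee j) + y := by rw [hy]; module
  rw [hx, map_add, h1, hfix]

end Lift

end CoxRigid

namespace CoxRigid

section Rho

variable {B : Type*} [Fintype B] [DecidableEq B] {W : Type*} [Group W]
  {M : CoxeterMatrix B} (cs : CoxeterSystem M W)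

/-- the geometric representation -/
noncomputable def rho : W →* Module.End ℝ (B → ℝ) :=
  cs.lift ⟨fun i => refl M i, refl_liftable M⟩

lemma rho_simple (i : B) : rho cs (cs.simple i) = refl M i :=
  cs.lift_apply_simple (refl_liftable M) i

lemma rho_inv_apply (w : W) (x : B → ℝ) : rho cs w⁻¹ (rho cs w x) = x := by
  rw [← Module.End.mul_apply, ← map_mul, inv_mul_cancel, map_one, Module.End.one_apply]

lemma rho_injective (w : W) : Function.Injective (rho cs w) := by
  intro x y hxy
  have := congrArg (rho cs w⁻¹) hxy
  rwa [rho_inv_apply, rho_inv_apply] at this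

/-- positivity of a vector -/
def IsPos (x : B → ℝ) : Prop := ∀ b, 0 ≤ x b

lemma isPos_ee (i : B) : IsPos (ee i) := by
  intro b; rw [ee_apply]; split <;> norm_num

lemma ee_ne_zero (i : B) : ee i ≠ 0 := by
  intro h
  have := congrFun h i
  rw [ee_self] at this
  norm_num at this

end Rho

section Words

variable {B : Type*} [Fintype B] [DecidableEq B] {W : Type*} [Group W]
  {M : CoxeterMatrix B} (cs : CoxeterSystem M W)

/-- a word in the letters i, j -/
def ijw (i j : B) (ω : List B) : Prop := ∀ t ∈ ω, t = i ∨ t = j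

lemma ijw_swap {i j : B} {ω : List B} (h : ijw i j ω) : ijw j i ω :=
  fun t ht => (h t ht).symm

lemma ijw_alt (i j : B) {X Y : B} (hX : X = i ∨ X = j) (hY : Y = i ∨ Y = j) :
    ∀ n, ijw i j (alternatingWord X Y n) := by
  intro n
  induction n with
  | zero => intro t ht; simp [alternatingWord] at ht
  | succ n ih =>
    intro t ht
    rw [alternatingWord_succ'] at ht
    rcases List.mem_cons.mp ht with h | h
    · subst h; split <;> assumption
    · exact ih t h

lemma ijw_append {i j : B} {ω κ : List B} (h1 : ijw i j ω) (h2 : ijw i j κ) :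
    ijw i j (ω ++ κ) := by
  intro t ht
  rcases List.mem_append.mp ht with h | h
  · exact h1 t h
  · exact h2 t h

/-- non-chain words can be shortened by 2 -/
lemma shorten : ∀ (ω : List B) (i j : B), ijw i j ω → ¬ ω.Chain' (· ≠ ·) →
    ∃ κ, ijw i j κ ∧ κ.length + 2 = ω.length ∧ cs.wordProd κ = cs.wordProd ω := by
  intro ω
  induction ω with
  | nil => intro i j _ hch; exact absurd List.isChain_nil hch
  | cons a tail ih =>
    intro i j hw hch
    match tail with
    | [] => exact absurd (List.isChain_singleton a) hch
    | b :: rest =>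
      by_cases hab : a = b
      · refine ⟨rest, fun t ht => hw t (by simp [ht]), by simp, ?_⟩
        subst hab
        rw [wordProd_cons, wordProd_cons, simple_mul_simple_cancel_left]
      · have hch' : ¬ (b :: rest).Chain' (· ≠ ·) := by
          intro h
          exact hch (List.isChain_cons_cons.mpr ⟨hab, h⟩)
        obtain ⟨κ, hκw, hκl, hκp⟩ := ih i j (fun t ht => hw t (List.mem_cons_of_mem a ht)) hch'
        refine ⟨a :: κ, ?_, by simpa using hκl, ?_⟩
        · intro t ht
          rcases List.mem_cons.mp ht with h | h
          · exact hw t (by simp [h])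
          · exact hκw t h
        · rw [wordProd_cons, wordProd_cons, hκp]

/-- a chain word over {i,j} ending in j is the alternating word -/
lemma alt_identify : ∀ (n : ℕ) (i j : B), i ≠ j → ∀ ω : List B, ijw i j ω →
    ω.Chain' (· ≠ ·) → ω.length = n → (ω = [] ∨ ∃ ω₀, ω = ω₀ ++ [j]) →
    ω = alternatingWord i j n := by
  intro n
  induction n with
  | zero =>
    intro i j _ ω _ _ hlen _
    rw [List.length_eq_zero_iff] at hlen
    rw [hlen]; rfl
  | succ n ih =>
    intro i j hij ω hw hch hlen hend
    rcases hend with rfl | ⟨ω₀, rfl⟩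
    · simp at hlen
    have hl0 : ω₀.length = n := by simpa using hlen
    have hch0 : ω₀.Chain' (· ≠ ·) := hch.prefix ⟨[j], rfl⟩
    have hw0 : ijw i j ω₀ := fun t ht => hw t (by simp [ht])
    have hend0 : ω₀ = [] ∨ ∃ ω₁, ω₀ = ω₁ ++ [i] := by
      rcases List.eq_nil_or_concat ω₀ with h | ⟨ω₁, t, rfl⟩
      · exact Or.inl h
      · right
        have ht : t = i ∨ t = j := hw0 t (by simp)
        have hne : t ≠ j := by
          have h3 := (List.isChain_append.mp hch).2.2
          intro hcon
          exact (h3 t (by simp) j (by simp)) (by rw [hcon])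
        refine ⟨ω₁, ?_⟩
        rcases ht with h | h
        · rw [h]; simp
        · exact absurd h hne
    have := ih j i hij.symm ω₀ (ijw_swap hw0) hch0 hl0 hend0
    rw [this, alternatingWord_succ]
    simp

/-- decomposition of alternating words -/
lemma alt_decomp : ∀ (b : ℕ) (i j : B) (a : ℕ), alternatingWord i j (a + b)
    = alternatingWord (if Even b then i else j) (if Even b then j else i) a
      ++ alternatingWord i j b := by
  intro b
  induction b with
  | zero =>
    intro i j a
    have h0 : alternatingWord i j 0 = ([] : List B) := rfl
    simp [h0]
  | succ b ihb =>
    intro i j a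
    have h1 : a + (b + 1) = (a + b) + 1 := by omega
    rw [h1, alternatingWord_succ, ihb j i a, alternatingWord_succ i j b]
    by_cases hb : Even b <;>
      simp [hb, Nat.even_add_one, List.concat_eq_append, List.append_assoc]

end Words

end CoxRigid

namespace CoxRigid

section Rank2

variable {B : Type*} [Fintype B] [DecidableEq B] {W : Type*} [Group W]
  {M : CoxeterMatrix B} (cs : CoxeterSystem M W)

lemma rank2_pos (i j : B) (hij : i ≠ j) (p : ℕ) (hp : M i j ≠ 0 → p + 1 ≤ M i j) :
    ∃ a b : ℝ, 0 ≤ a ∧ 0 ≤ b ∧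
      rho cs (cs.wordProd (alternatingWord i j p)) (ee i) = a • ee i + b • ee j := by
  classical
  set m := M i j with hm
  set c : ℝ := if m = 0 then 1 else Real.cos (Real.pi / m) with hc
  have hkm : km M i j = -c := by
    unfold km
    rw [hc, ← hm]
    split <;> ring
  have hsin : m ≠ 0 → 0 < Real.sin (Real.pi / m) := by
    intro h0
    have h2 : 2 ≤ m := two_le_M M hij h0
    have h2' : (2:ℝ) ≤ (m : ℝ) := by exact_mod_cast h2
    apply Real.sin_pos_of_pos_of_lt_pi
    · apply div_pos Real.pi_pos; linarith
    · calc Real.pi / (m:ℝ) ≤ Real.pi / 2 := by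
            apply div_le_div_of_nonneg_left (le_of_lt Real.pi_pos) (by norm_num) h2'
        _ < Real.pi := by linarith [Real.pi_pos]
  set S : ℕ → ℝ := fun q => if m = 0 then (q:ℝ)
    else Real.sin (q * (Real.pi / m)) / Real.sin (Real.pi / m) with hS
  have hS0 : S 0 = 0 := by
    rw [hS]; split <;> simp
  have hS1 : S 1 = 1 := by
    simp only [hS]
    by_cases h0 : m = 0
    · simp [h0]
    · rw [if_neg h0]
      push_cast
      rw [one_mul]
      exact div_self (ne_of_gt (hsin h0))
  have hrec : ∀ q : ℕ, S (q + 2) = 2 * c * S (q + 1) - S q := by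
    intro q
    simp only [hS, hc]
    by_cases h0 : m = 0
    · rw [if_pos h0, if_pos h0, if_pos h0, if_pos h0]
      push_cast; ring
    · rw [if_neg h0, if_neg h0, if_neg h0, if_neg h0]
      have hsne := ne_of_gt (hsin h0)
      set θ := Real.pi / m
      have key : Real.sin (((q:ℝ)+2)*θ) = 2*Real.cos θ*Real.sin (((q:ℝ)+1)*θ)
          - Real.sin ((q:ℝ)*θ) := by
        have e1 : ((q:ℝ)+2)*θ = ((q:ℝ)+1)*θ + θ := by ring
        have e2 : ((q:ℝ))*θ = ((q:ℝ)+1)*θ - θ := by ring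
        rw [e1, e2, Real.sin_add, Real.sin_sub]
        ring
      push_cast
      rw [key]
      field_simp
  have hnneg : ∀ q : ℕ, (m ≠ 0 → q ≤ m) → 0 ≤ S q := by
    intro q hq
    simp only [hS]
    by_cases h0 : m = 0
    · rw [if_pos h0]; positivity
    · rw [if_neg h0]
      apply div_nonneg _ (le_of_lt (hsin h0))
      apply Real.sin_nonneg_of_nonneg_of_le_pi
      · positivity
      · have hqm : (q:ℝ) ≤ (m:ℝ) := by exact_mod_cast hq h0
        have hmpos : (0:ℝ) < (m:ℝ) := by
          have := two_le_M M hij h0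
          have : (2:ℝ) ≤ (m:ℝ) := by exact_mod_cast this
          linarith
        calc (q:ℝ) * (Real.pi / m) ≤ (m:ℝ) * (Real.pi / m) := by
              apply mul_le_mul_of_nonneg_right hqm
              exact div_nonneg (le_of_lt Real.pi_pos) (le_of_lt hmpos)
          _ = Real.pi := by field_simp
  have main : ∀ p' : ℕ, (m ≠ 0 → p' + 1 ≤ m) →
      rho cs (cs.wordProd (alternatingWord i j p')) (ee i)
      = (if Even p' then S (p'+1) else S p') • ee i
        + (if Even p' then S p' else S (p'+1)) • ee j := by
    intro p'
    induction p' with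
    | zero =>
      intro _
      have h0 : alternatingWord i j 0 = ([] : List B) := rfl
      rw [h0, wordProd_nil, map_one, Module.End.one_apply]
      simp [hS0, hS1]
    | succ q ihq =>
      intro hq1
      have hq : m ≠ 0 → q + 1 ≤ m := fun h => by have := hq1 h; omega
      have ih := ihq hq
      rw [alternatingWord_succ', wordProd_cons, map_mul, Module.End.mul_apply, ih]
      by_cases hev : Even q
      · have hodd : ¬ Even (q+1) := by simp [Nat.even_add_one, hev]
        rw [if_pos hev, if_pos hev, if_pos hev, if_neg hodd, if_neg hodd, rho_simple,
          refl_span_j M hkm, hrec q]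
      · have hev' : Even (q+1) := by simp [Nat.even_add_one, hev]
        rw [if_neg hev, if_neg hev, if_neg hev, if_pos hev', if_pos hev', rho_simple,
          refl_span_i M hkm, hrec q]
  refine ⟨_, _, ?_, ?_, main p hp⟩
  · split
    · exact hnneg (p+1) (fun h => hp h)
    · exact hnneg p (fun h => by have := hp h; omega)
  · split
    · exact hnneg p (fun h => by have := hp h; omega)
    · exact hnneg (p+1) (fun h => hp h)

end Rank2

section Greedy

variable {B : Type*} [Fintype B] [DecidableEq B] {W : Type*} [Group W]
  {M : CoxeterMatrix B} (cs : CoxeterSystem M W)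

lemma descent_length {w : W} {t : B} (h : cs.IsRightDescent w t) :
    cs.length (w * cs.simple t) + 1 = cs.length w := by
  rcases cs.length_mul_simple w t with h' | h'
  · exfalso; unfold CoxeterSystem.IsRightDescent at h; omega
  · omega

lemma not_descent_length {w : W} {t : B} (h : ¬ cs.IsRightDescent w t) :
    cs.length (w * cs.simple t) = cs.length w + 1 := by
  rcases cs.length_mul_simple w t with h' | h'
  · exact h'
  · exfalso
    apply h
    unfold CoxeterSystem.IsRightDescent
    omega

lemma greedy : ∀ (n : ℕ) (w : W), cs.length w ≤ n → ∀ i j : B,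
    ∃ (v : W) (ω : List B), ijw i j ω ∧ w = v * cs.wordProd ω ∧
      cs.length w = cs.length v + ω.length ∧
      ¬cs.IsRightDescent v i ∧ ¬cs.IsRightDescent v j := by
  intro n
  induction n with
  | zero =>
    intro w hw i j
    refine ⟨w, [], fun t ht => by simp at ht, by simp, by simp, ?_, ?_⟩ <;>
    · intro hd
      unfold CoxeterSystem.IsRightDescent at hd
      omega
  | succ n ih =>
    intro w hw i j
    by_cases hi : cs.IsRightDescent w i
    · have hlen := descent_length cs hi
      obtain ⟨v, ω, h1, h2, h3, h4, h5⟩ := ih (w * cs.simple i) (by omega) i j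
      refine ⟨v, ω.concat i, ?_, ?_, ?_, h4, h5⟩
      · intro t ht
        rw [List.concat_eq_append, List.mem_append] at ht
        rcases ht with h | h
        · exact h1 t h
        · exact Or.inl (by simpa using h)
      · rw [wordProd_concat, ← mul_assoc, ← h2, simple_mul_simple_cancel_right]
      · rw [List.length_concat]
        omega
    by_cases hj : cs.IsRightDescent w j
    · have hlen := descent_length cs hj
      obtain ⟨v, ω, h1, h2, h3, h4, h5⟩ := ih (w * cs.simple j) (by omega) i j
      refine ⟨v, ω.concat j, ?_, ?_, ?_, h4, h5⟩
      · intro t ht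
        rw [List.concat_eq_append, List.mem_append] at ht
        rcases ht with h | h
        · exact h1 t h
        · exact Or.inr (by simpa using h)
      · rw [wordProd_concat, ← mul_assoc, ← h2, simple_mul_simple_cancel_right]
      · rw [List.length_concat]
        omega
    exact ⟨w, [], fun t ht => by simp at ht, by simp, by simp, hi, hj⟩

end Greedy

end CoxRigid

namespace CoxRigid

section PosThm

variable {B : Type*} [Fintype B] [DecidableEq B] {W : Type*} [Group W]
  {M : CoxeterMatrix B} (cs : CoxeterSystem M W)

theorem pos_of_not_descent : ∀ (n : ℕ) (w : W), cs.length w ≤ n →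
    ∀ i : B, ¬cs.IsRightDescent w i → IsPos (rho cs w (ee i)) := by
  intro n
  induction n with
  | zero =>
    intro w hw i _
    have h1 : w = 1 := cs.length_eq_zero_iff.mp (by omega)
    rw [h1, map_one, Module.End.one_apply]
    exact isPos_ee i
  | succ n ih =>
    intro w hw i hi
    by_cases h1 : w = 1
    · rw [h1, map_one, Module.End.one_apply]; exact isPos_ee i
    obtain ⟨j, hj⟩ := cs.exists_rightDescent_of_ne_one h1
    have hij : i ≠ j := by rintro rfl; exact hi hj
    obtain ⟨v, ω, hijw, hvw, hlen, hvi, hvj⟩ := greedy cs (n+1) w hw i j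
    have hωne : ω.length ≠ 0 := by
      intro h
      rw [List.length_eq_zero_iff] at h
      subst h
      rw [wordProd_nil, mul_one] at hvw
      rw [hvw] at hj
      exact hvj hj
    have hlv : cs.length v ≤ n := by omega
    classical
    set x := cs.wordProd ω with hx
    have hex : ∃ nn : ℕ, ∃ κ : List B, ijw i j κ ∧ κ.length = nn ∧ cs.wordProd κ = x :=
      ⟨ω.length, ω, hijw, rfl, rfl⟩
    set p := Nat.find hex with hp
    obtain ⟨μ, hμw, hμl, hμx⟩ := Nat.find_spec hex
    have hple : p ≤ ω.length := Nat.find_min' hex ⟨ω, hijw, rfl, rfl⟩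
    have hwsi : cs.length w + 1 ≤ cs.length (w * cs.simple i) := by
      rw [not_descent_length cs hi]
    have claimA : ∀ κ : List B, ijw i j κ → cs.wordProd κ = x * cs.simple i →
        p + 1 ≤ κ.length := by
      intro κ hκw hκx
      have h2 : cs.length (w * cs.simple i) ≤ cs.length v + κ.length := by
        have h3 : w * cs.simple i = v * cs.wordProd κ := by
          rw [hκx, hvw, hx]; group
        rw [h3]
        calc cs.length (v * cs.wordProd κ)
            ≤ cs.length v + cs.length (cs.wordProd κ) := cs.length_mul_le _ _
          _ ≤ cs.length v + κ.length := by
              have := cs.length_wordProd_le κ; omega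
      omega
    have hchain : μ.Chain' (· ≠ ·) := by
      by_contra hch
      obtain ⟨κ, hκw, hκl, hκp⟩ := shorten cs μ i j hμw hch
      have : p ≤ κ.length := Nat.find_min' hex ⟨κ, hκw, rfl, by rw [hκp, hμx]⟩
      omega
    have hend : μ = [] ∨ ∃ μ₀, μ = μ₀ ++ [j] := by
      rcases List.eq_nil_or_concat μ with h | ⟨μ₀, t, rfl⟩
      · exact Or.inl h
      · right
        have ht := hμw t (by simp)
        rcases ht with h | h
        · exfalso
          have h4 : cs.wordProd (μ₀.concat t) = cs.wordProd μ₀ * cs.simple i := by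
            rw [wordProd_concat, h]
          have hx0 : cs.wordProd μ₀ = x * cs.simple i := by
            rw [← hμx, h4, simple_mul_simple_cancel_right]
          have h5 := claimA μ₀ (fun u hu => hμw u (by
            rw [List.concat_eq_append, List.mem_append]; exact Or.inl hu)) hx0
          have h6 : μ₀.length + 1 = p := by rw [hp, ← hμl, List.length_concat]
          omega
        · exact ⟨μ₀, by rw [h, List.concat_eq_append]⟩
    have hμalt : μ = alternatingWord i j p := alt_identify p i j hij μ hμw hchain hμl hend
    have hxalt : cs.wordProd (alternatingWord i j p) = x := by rw [← hμalt, hμx]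
    have claimE : M i j ≠ 0 → p + 1 ≤ M i j := by
      intro hm0
      by_contra hcon
      push_neg at hcon
      have hmp : M i j ≤ p := by omega
      obtain ⟨m', hm'⟩ : ∃ m', M i j = m' + 1 := ⟨M i j - 1, by omega⟩
      have hdecomp : alternatingWord i j p
          = alternatingWord (if Even (M i j) then i else j)
              (if Even (M i j) then j else i) (p - M i j)
            ++ alternatingWord i j (M i j) := by
        have h7 := alt_decomp (M i j) i j (p - M i j)
        rwa [Nat.sub_add_cancel hmp] at h7
      have hbraid : cs.wordProd (alternatingWord i j (M i j))
          = cs.wordProd (alternatingWord j i (M i j)) := by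
        have h8 := cs.wordProd_braidWord_eq i j
        simp only [CoxeterSystem.braidWord] at h8
        rwa [show M j i = M i j from M.symmetric j i] at h8
      have hji : alternatingWord j i (m' + 1) = (alternatingWord i j m').concat i :=
        alternatingWord_succ j i m'
      set κ := (alternatingWord (if Even (M i j) then i else j)
          (if Even (M i j) then j else i) (p - M i j)) ++ alternatingWord i j m' with hκ
      have hκw : ijw i j κ := by
        apply ijw_append
        · apply ijw_alt i j
          · split
            · exact Or.inl rfl
            · exact Or.inr rfl
          · split
            · exact Or.inr rfl
            · exact Or.inl rfl
        · exact ijw_alt i j (Or.inl rfl) (Or.inr rfl) m'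
      have hκx : cs.wordProd κ = x * cs.simple i := by
        have h9 : x = cs.wordProd (alternatingWord (if Even (M i j) then i else j)
              (if Even (M i j) then j else i) (p - M i j))
            * ((cs.wordProd (alternatingWord i j m')) * cs.simple i) := by
          rw [← hxalt, hdecomp, wordProd_append, hbraid, hm', hji, wordProd_concat]
        rw [hκ, wordProd_append, h9, mul_assoc, simple_mul_simple_cancel_right]
      have h10 := claimA κ hκw hκx
      have h11 : κ.length = (p - M i j) + m' := by
        rw [hκ, List.length_append, length_alternatingWord, length_alternatingWord]
      omega
    obtain ⟨a, b, ha, hb, hrank⟩ := rank2_pos cs i j hij p claimE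
    rw [hxalt] at hrank
    have hwdec : rho cs w (ee i) = a • (rho cs v (ee i)) + b • (rho cs v (ee j)) := by
      rw [hvw, map_mul, Module.End.mul_apply, hrank, map_add, map_smul, map_smul]
    intro bb
    rw [hwdec]
    have hpi := ih v hlv i hvi bb
    have hpj := ih v hlv j hvj bb
    simp only [Pi.add_apply, Pi.smul_apply, smul_eq_mul]
    have := mul_nonneg ha hpi
    have := mul_nonneg hb hpj
    linarith

end PosThm

end CoxRigid

namespace CoxRigid

section Roots

variable {B : Type*} [Fintype B] [DecidableEq B] {W : Type*} [Group W]
  {M : CoxeterMatrix B} (cs : CoxeterSystem M W)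

def IsNeg (x : B → ℝ) : Prop := ∀ b, x b ≤ 0

lemma pos' (w : W) (i : B) (h : ¬cs.IsRightDescent w i) : IsPos (rho cs w (ee i)) :=
  pos_of_not_descent cs (cs.length w) w le_rfl i h

lemma neg_of_descent (w : W) (i : B) (h : cs.IsRightDescent w i) :
    IsNeg (rho cs w (ee i)) := by
  have h1 : ¬ cs.IsRightDescent (w * cs.simple i) i := by
    intro hd
    unfold CoxeterSystem.IsRightDescent at hd h
    rw [simple_mul_simple_cancel_right] at hd
    omega
  have h2 := pos' cs (w * cs.simple i) i h1
  have h3 : rho cs w (ee i) = - (rho cs (w * cs.simple i) (ee i)) := by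
    have h4 : rho cs w (ee i) = rho cs (w * cs.simple i) (rho cs (cs.simple i) (ee i)) := by
      rw [← Module.End.mul_apply, ← map_mul, simple_mul_simple_cancel_right]
    rw [h4, rho_simple, refl_ee_self, map_neg]
  rw [h3]
  intro b
  have := h2 b
  simp only [Pi.neg_apply]
  linarith

def IsRoot (x : B → ℝ) : Prop := ∃ (u : W) (i : B), x = rho cs u (ee i)

lemma isRoot_ee (i : B) : IsRoot cs (ee i) :=
  ⟨1, i, by rw [map_one, Module.End.one_apply]⟩

lemma isRoot_rho {x : B → ℝ} (u : W) (h : IsRoot cs x) : IsRoot cs (rho cs u x) := by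
  obtain ⟨u', i, rfl⟩ := h
  exact ⟨u * u', i, by rw [map_mul, Module.End.mul_apply]⟩

lemma root_ne_zero {x : B → ℝ} (h : IsRoot cs x) : x ≠ 0 := by
  obtain ⟨u, i, rfl⟩ := h
  intro hc
  have h2 := congrArg (rho cs u⁻¹) hc
  rw [rho_inv_apply, map_zero] at h2
  exact ee_ne_zero i h2

lemma root_dichotomy {x : B → ℝ} (h : IsRoot cs x) : IsPos x ∨ IsNeg x := by
  obtain ⟨u, i, rfl⟩ := h
  by_cases hd : cs.IsRightDescent u i
  · exact Or.inr (neg_of_descent cs u i hd)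
  · exact Or.inl (pos' cs u i hd)

lemma eq_zero_of_pos_neg {x : B → ℝ} (hp : IsPos x) (hn : IsNeg x) : x = 0 := by
  funext b
  exact le_antisymm (hn b) (hp b)

/-- full bilinear form -/
noncomputable def bf (x y : B → ℝ) : ℝ := ∑ a, x a * bfi M a y

lemma bf_ee_left (i : B) (y : B → ℝ) : bf (M := M) (ee i) y = bfi M i y := by
  unfold bf
  rw [Finset.sum_eq_single i]
  · rw [ee_self, one_mul]
  · intro b _ hb; simp [ee_apply, hb]
  · intro h; exact absurd (Finset.mem_univ i) h

lemma bf_symm (x y : B → ℝ) : bf (M := M) x y = bf (M := M) y x := by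
  unfold bf bfi
  simp_rw [Finset.mul_sum]
  rw [Finset.sum_comm]
  congr 1; ext a
  congr 1; ext b
  rw [km_symm]
  ring

lemma bf_ee_right (i : B) (x : B → ℝ) : bf (M := M) x (ee i) = bfi M i x := by
  rw [bf_symm, bf_ee_left]

lemma bf_sub_left (x y z : B → ℝ) :
    bf (M := M) (x - y) z = bf (M := M) x z - bf (M := M) y z := by
  unfold bf
  rw [← Finset.sum_sub_distrib]
  congr 1; ext a; simp [sub_mul]

lemma bf_sub_right (x y z : B → ℝ) :
    bf (M := M) z (x - y) = bf (M := M) z x - bf (M := M) z y := by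
  rw [bf_symm, bf_sub_left, bf_symm x z, bf_symm y z]

lemma bf_smul_left (c : ℝ) (x z : B → ℝ) :
    bf (M := M) (c • x) z = c * bf (M := M) x z := by
  unfold bf
  rw [Finset.mul_sum]
  congr 1; ext a; simp; ring

lemma bf_smul_right (c : ℝ) (x z : B → ℝ) :
    bf (M := M) z (c • x) = c * bf (M := M) z x := by
  rw [bf_symm, bf_smul_left, bf_symm]

lemma bf_refl (t : B) (x y : B → ℝ) :
    bf (M := M) (refl M t x) (refl M t y) = bf (M := M) x y := by
  rw [refl_apply, refl_apply]
  simp only [bf_sub_left, bf_sub_right, bf_smul_left, bf_smul_right, bf_ee_left, bf_ee_right,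
    bfi_sub, bfi_smul, bfi_ee, km_diag]
  ring

lemma bf_rho (u : W) : ∀ x y : B → ℝ,
    bf (M := M) (rho cs u x) (rho cs u y) = bf (M := M) x y := by
  induction u using cs.simple_induction with
  | simple i =>
    intro x y
    rw [rho_simple]
    exact bf_refl i x y
  | one =>
    intro x y
    rw [map_one, Module.End.one_apply, Module.End.one_apply]
  | mul w w' hw hw' =>
    intro x y
    rw [map_mul, Module.End.mul_apply, Module.End.mul_apply, hw, hw']

end Roots

end CoxRigid

namespace CoxRigid

section Roots2

variable {B : Type*} [Fintype B] [DecidableEq B] {W : Type*} [Group W]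
  {M : CoxeterMatrix B} (cs : CoxeterSystem M W)

lemma root_bf_one {x : B → ℝ} (h : IsRoot cs x) : bf (M := M) x x = 1 := by
  obtain ⟨u, i, rfl⟩ := h
  rw [bf_rho, bf_ee_left, bfi_ee, km_diag]

/-- a positive root other than `ee t` stays positive under `refl t` -/
lemma refl_pos_root {t : B} {x : B → ℝ} (hr : IsRoot cs x) (hp : IsPos x) (hne : x ≠ ee t) :
    IsPos (rho cs (cs.simple t) x) := by
  have hroot : IsRoot cs (rho cs (cs.simple t) x) := isRoot_rho cs _ hr
  rcases root_dichotomy cs hroot with h | h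
  · exact h
  exfalso
  have hzero : ∀ b, b ≠ t → x b = 0 := by
    intro b hb
    have h1 := h b
    rw [rho_simple, refl_apply] at h1
    simp only [Pi.sub_apply, Pi.smul_apply, ee_apply, if_neg hb, smul_eq_mul,
      mul_zero, sub_zero] at h1
    exact le_antisymm h1 (hp b)
  have hx : x = (x t) • ee t := by
    funext b
    by_cases hb : b = t
    · subst hb; simp [ee_self]
    · rw [hzero b hb]; simp [ee_apply, hb]
  have h2 := root_bf_one cs hr
  rw [hx, bf_smul_left, bf_smul_right, bf_ee_left, bfi_ee, km_diag, mul_one] at h2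
  have h3 : x t = 1 ∨ x t = -1 := by
    rcases mul_self_eq_one_iff.mp (by linarith [h2] : x t * x t = 1) with h | h
    · exact Or.inl h
    · exact Or.inr h
  rcases h3 with h3 | h3
  · apply hne
    rw [hx, h3, one_smul]
  · have := hp t
    rw [h3] at this
    norm_num at this

/-- inversion set -/
def invSet (w : W) : Set (B → ℝ) := {x | IsRoot cs x ∧ IsPos x ∧ IsNeg (rho cs w x)}

lemma invSet_one : invSet cs (1 : W) = ∅ := by
  ext x
  simp only [invSet, Set.mem_setOf_eq, Set.mem_empty_iff_false, iff_false]
  rintro ⟨hr, hp, hn⟩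
  rw [map_one, Module.End.one_apply] at hn
  exact root_ne_zero cs hr (eq_zero_of_pos_neg hp hn)

lemma ee_mem_invSet {w : W} {t : B} (h : cs.IsRightDescent w t) : ee t ∈ invSet cs w :=
  ⟨isRoot_ee cs t, isPos_ee t, neg_of_descent cs w t h⟩

lemma ee_not_mem_invSet {w : W} {t : B} (h : ¬cs.IsRightDescent w t) : ee t ∉ invSet cs w := by
  rintro ⟨hr, hp, hn⟩
  have := pos' cs w t h
  have hz := eq_zero_of_pos_neg this hn
  have : rho cs w⁻¹ (rho cs w (ee t)) = 0 := by rw [hz, map_zero]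
  rw [rho_inv_apply] at this
  exact ee_ne_zero t this

lemma invSet_subset {w : W} {t : B} (h : cs.IsRightDescent w t) :
    invSet cs w ⊆ insert (ee t) ((rho cs (cs.simple t)) '' invSet cs (w * cs.simple t)) := by
  intro x ⟨hr, hp, hn⟩
  by_cases hx : x = ee t
  · rw [hx]; exact Set.mem_insert _ _
  apply Set.mem_insert_of_mem
  refine ⟨rho cs (cs.simple t) x, ⟨isRoot_rho cs _ hr, refl_pos_root cs hr hp hx, ?_⟩, ?_⟩
  · have : rho cs (w * cs.simple t) (rho cs (cs.simple t) x) = rho cs w x := by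
      rw [← Module.End.mul_apply, ← map_mul, mul_assoc, simple_mul_simple_self, mul_one]
    rw [this]
    exact hn
  · rw [← Module.End.mul_apply, ← map_mul, simple_mul_simple_self, map_one, Module.End.one_apply]

lemma invSet_finite (w : W) : (invSet cs w).Finite := by
  generalize hn : cs.length w = n
  induction n using Nat.strong_induction_on generalizing w with
  | _ n ih =>
    by_cases h1 : w = 1
    · rw [h1, invSet_one]; exact Set.finite_empty
    obtain ⟨t, ht⟩ := cs.exists_rightDescent_of_ne_one h1
    have hlen := descent_length cs ht
    have hfin : (invSet cs (w * cs.simple t)).Finite := by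
      exact ih (cs.length (w * cs.simple t)) (by omega) _ rfl
    exact Set.Finite.subset (Set.Finite.insert _ (Set.Finite.image _ hfin)) (invSet_subset cs ht)

lemma invSet_superset {w : W} {t : B} (h : ¬cs.IsRightDescent w t) :
    insert (ee t) ((rho cs (cs.simple t)) '' invSet cs w) ⊆ invSet cs (w * cs.simple t) := by
  intro x hx
  rcases Set.mem_insert_iff.mp hx with rfl | ⟨y, ⟨hr, hp, hn⟩, rfl⟩
  · refine ⟨isRoot_ee cs t, isPos_ee t, ?_⟩
    have : rho cs (w * cs.simple t) (ee t) = - rho cs w (ee t) := by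
      rw [map_mul, Module.End.mul_apply, rho_simple, refl_ee_self, map_neg]
    rw [this]
    intro b
    have := pos' cs w t h b
    simp only [Pi.neg_apply]
    linarith
  · have hyne : y ≠ ee t := by
      rintro rfl
      exact ee_not_mem_invSet cs h ⟨hr, hp, hn⟩
    refine ⟨isRoot_rho cs _ hr, refl_pos_root cs hr hp hyne, ?_⟩
    have : rho cs (w * cs.simple t) (rho cs (cs.simple t) y) = rho cs w y := by
      rw [← Module.End.mul_apply, ← map_mul, mul_assoc, simple_mul_simple_self, mul_one]
    rw [this]
    exact hn

lemma invSet_card (w : W) : cs.length w ≤ (invSet cs w).ncard := by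
  generalize hn : cs.length w = n
  induction n generalizing w with
  | zero => omega
  | succ n ih =>
    have h1 : w ≠ 1 := by
      intro h; rw [h, length_one] at hn; omega
    obtain ⟨t, ht⟩ := cs.exists_rightDescent_of_ne_one h1
    set w' := w * cs.simple t with hw'
    have hlen := descent_length cs ht
    have hln : cs.length w' = n := by rw [hw']; omega
    have hnd : ¬cs.IsRightDescent w' t := by
      intro hd
      unfold CoxeterSystem.IsRightDescent at hd
      rw [hw', simple_mul_simple_cancel_right] at hd
      omega
    have hsup := invSet_superset cs hnd
    rw [hw', simple_mul_simple_cancel_right] at hsup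
    have hfin' : (invSet cs w').Finite := invSet_finite cs w'
    have hnotmem : ee t ∉ (rho cs (cs.simple t)) '' invSet cs w' := by
      rintro ⟨y, ⟨hr, hp, -⟩, hy⟩
      have : y = rho cs (cs.simple t) (ee t) := by
        rw [← hy, ← Module.End.mul_apply, ← map_mul, simple_mul_simple_self, map_one,
          Module.End.one_apply]
      rw [rho_simple, refl_ee_self] at this
      have h2 := hp t
      rw [this] at h2
      simp only [Pi.neg_apply] at h2
      rw [ee_self] at h2
      norm_num at h2
    have hcard : (insert (ee t) ((rho cs (cs.simple t)) '' invSet cs w')).ncard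
        = (invSet cs w').ncard + 1 := by
      rw [Set.ncard_insert_of_notMem hnotmem (Set.Finite.image _ hfin')]
      rw [Set.ncard_image_of_injective _ (rho_injective cs _)]
    have hmono : (insert (ee t) ((rho cs (cs.simple t)) '' invSet cs w')).ncard
        ≤ (invSet cs w).ncard := by
      apply Set.ncard_le_ncard hsup (invSet_finite cs w)
    have := ih w' hln
    omega

end Roots2

end CoxRigid

namespace CoxRigid

section Infinitude

variable {B : Type*} [Fintype B] [DecidableEq B] {W : Type*} [Group W]
  {M : CoxeterMatrix B} (cs : CoxeterSystem M W)

lemma exists_length_ge [Infinite W] (n : ℕ) : ∃ w : W, n ≤ cs.length w := by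
  by_contra h
  push_neg at h
  have hfin : Set.Finite {ω : List B | ω.length ≤ n} := List.finite_length_le B n
  have hcover : (Set.univ : Set W) ⊆ cs.wordProd '' {ω : List B | ω.length ≤ n} := by
    intro w _
    obtain ⟨ω, hω, rfl⟩ := cs.exists_reduced_word w
    exact ⟨ω, by rw [Set.mem_setOf_eq, ← hω.eq]; exact le_of_lt (h _), rfl⟩
  haveI : Finite W := by
    rw [← Set.finite_univ_iff]
    exact Set.Finite.subset (Set.Finite.image _ hfin) hcover
  exact not_finite W

def PosRoots : Set (B → ℝ) := {x | IsRoot cs x ∧ IsPos x}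

lemma posRoots_infinite [Infinite W] : (PosRoots cs).Infinite := by
  by_contra hcon
  rw [Set.not_infinite] at hcon
  obtain ⟨w, hw⟩ := exists_length_ge cs ((PosRoots cs).ncard + 1)
  have hsub : invSet cs w ⊆ PosRoots cs := fun x hx => ⟨hx.1, hx.2.1⟩
  have h1 := invSet_card cs w
  have hle : (invSet cs w).ncard ≤ (PosRoots cs).ncard := Set.ncard_le_ncard hsub hcon
  omega

lemma coord_infinite [Infinite W] (hirr : CoxIrreducible M) (k : B) :
    {x | x ∈ PosRoots cs ∧ 0 < x k}.Infinite := by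
  classical
  set A : Set B := {i | {x | x ∈ PosRoots cs ∧ 0 < x i}.Infinite} with hA
  have hne : A.Nonempty := by
    by_contra h
    rw [Set.not_nonempty_iff_eq_empty] at h
    have hfin : ∀ i : B, {x | x ∈ PosRoots cs ∧ 0 < x i}.Finite := by
      intro i
      by_contra hf
      have hi : i ∈ A := by rw [hA]; exact hf
      rw [h] at hi
      exact hi
    have hcover : (PosRoots cs) ⊆ ⋃ i : B, {x | x ∈ PosRoots cs ∧ 0 < x i} := by
      intro x hx
      have hxne := root_ne_zero cs hx.1
      have hex : ∃ i, 0 < x i := by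
        by_contra hc
        push_neg at hc
        apply hxne
        funext b
        exact le_antisymm (hc b) (hx.2 b)
      obtain ⟨i, hi⟩ := hex
      exact Set.mem_iUnion.mpr ⟨i, hx, hi⟩
    exact posRoots_infinite cs (Set.Finite.subset (Set.finite_iUnion hfin) hcover)
  have hstep : ∀ i ∈ A, ∀ j : B, j ≠ i → M i j ≠ 2 → j ∈ A := by
    intro i hi j hji hm2
    have hkmji : km M j i < 0 :=
      km_neg_of_ne_two M hji (by rw [M.symmetric j i]; exact hm2)
    have hsplit : {x | x ∈ PosRoots cs ∧ 0 < x i} ⊆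
        ({x | x ∈ PosRoots cs ∧ 0 < x i ∧ 0 < x j}
          ∪ {x | x ∈ PosRoots cs ∧ 0 < x i ∧ x j = 0}) := by
      intro x hx
      by_cases hj : 0 < x j
      · exact Or.inl ⟨hx.1, hx.2, hj⟩
      · exact Or.inr ⟨hx.1, hx.2, le_antisymm (not_lt.mp hj) (hx.1.2 j)⟩
    have hiInf : {x | x ∈ PosRoots cs ∧ 0 < x i}.Infinite := hi
    rcases Set.infinite_union.mp (hiInf.mono hsplit) with hcase | hcase
    · exact hcase.mono (fun x hx => ⟨hx.1, hx.2.2⟩)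
    · have himg : (rho cs (cs.simple j)) '' {x | x ∈ PosRoots cs ∧ 0 < x i ∧ x j = 0}
          ⊆ {x | x ∈ PosRoots cs ∧ 0 < x j} := by
        rintro _ ⟨x, ⟨⟨hroot, hpos⟩, hxi, hxj⟩, rfl⟩
        have hbfi : bfi M j x < 0 := by
          have hterm : ∀ b : B, b ≠ i → x b * km M j b ≤ 0 := by
            intro b hbi
            by_cases hbj : b = j
            · subst hbj; rw [hxj, zero_mul]
            · exact mul_nonpos_of_nonneg_of_nonpos (hpos b)
                (km_nonpos M (fun hc => hbj hc.symm))
          have hsum : bfi M j x = x i * km M j i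
              + ∑ b ∈ Finset.univ.erase i, x b * km M j b := by
            unfold bfi
            rw [← Finset.add_sum_erase _ _ (Finset.mem_univ i)]
          have hrest : ∑ b ∈ Finset.univ.erase i, x b * km M j b ≤ 0 :=
            Finset.sum_nonpos (fun b hb => hterm b (Finset.ne_of_mem_erase hb))
          have hpt := mul_neg_of_pos_of_neg hxi hkmji
          rw [hsum]
          linarith
        refine ⟨⟨isRoot_rho cs _ hroot, ?_⟩, ?_⟩
        · intro b
          rw [rho_simple, refl_apply]
          simp only [Pi.sub_apply, Pi.smul_apply, ee_apply, smul_eq_mul]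
          by_cases hbj : b = j
          · have h1 : (if b = j then (1:ℝ) else 0) = 1 := if_pos hbj
            rw [h1, hbj, hxj]
            nlinarith
          · rw [if_neg hbj]
            have := hpos b
            linarith
        · rw [rho_simple, refl_apply]
          simp only [Pi.sub_apply, Pi.smul_apply, ee_apply, smul_eq_mul]
          rw [hxj]
          have h2 : (if True then (1:ℝ) else 0) = 1 := if_pos trivial
          rw [h2]
          nlinarith
      have hinj : Set.InjOn (rho cs (cs.simple j))
          {x | x ∈ PosRoots cs ∧ 0 < x i ∧ x j = 0} :=
        (rho_injective cs _).injOn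
      exact (hcase.image hinj).mono himg
  have hcl : ∀ i ∈ A, ∀ j ∉ A, M i j = 2 := by
    intro i hi j hj
    by_contra hm2
    have hji : j ≠ i := by rintro rfl; exact hj hi
    exact hj (hstep i hi j hji hm2)
  rcases hirr A hcl with h | h
  · exfalso
    obtain ⟨i, hi⟩ := hne
    rw [h] at hi
    exact hi
  · show k ∈ A
    rw [h]
    trivial

end Infinitude

section Tits

variable {B : Type*} [Fintype B] [DecidableEq B] {W : Type*} [Group W]
  {M : CoxeterMatrix B} (cs : CoxeterSystem M W)

lemma functional_sum (f : (B → ℝ) →ₗ[ℝ] ℝ) (z : B → ℝ) : f z = ∑ b, z b * f (ee b) := by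
  have hz : z = ∑ b, z b • ee b := by
    funext a
    rw [Finset.sum_apply]
    simp only [Pi.smul_apply, ee_apply, smul_eq_mul, mul_ite, mul_one, mul_zero]
    rw [Finset.sum_ite_eq Finset.univ a z]
    simp
  conv_lhs => rw [hz]
  rw [map_sum]
  congr 1
  ext b
  rw [map_smul]
  simp

lemma functional_nonpos {f : (B → ℝ) →ₗ[ℝ] ℝ} (hf : ∀ b, 0 ≤ f (ee b)) {z : B → ℝ}
    (hz : IsNeg z) : f z ≤ 0 := by
  rw [functional_sum]
  apply Finset.sum_nonpos
  intro b _
  exact mul_nonpos_of_nonpos_of_nonneg (hz b) (hf b)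

theorem tits : ∀ (n : ℕ) (u : W), cs.length u ≤ n → ∀ f g : (B → ℝ) →ₗ[ℝ] ℝ,
    (∀ b, 0 ≤ f (ee b)) → (∀ b, 0 ≤ g (ee b)) → (∀ x, f (rho cs u x) = g x) → f = g := by
  intro n
  induction n with
  | zero =>
    intro u hu f g _ _ hfg
    have h1 : u = 1 := cs.length_eq_zero_iff.mp (by omega)
    apply LinearMap.ext
    intro x
    have := hfg x
    rwa [h1, map_one, Module.End.one_apply] at this
  | succ n ih =>
    intro u hu f g hf hg hfg
    by_cases h1 : u = 1
    · apply LinearMap.ext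
      intro x
      have := hfg x
      rwa [h1, map_one, Module.End.one_apply] at this
    obtain ⟨t, ht⟩ := cs.exists_rightDescent_of_ne_one h1
    have hgt : g (ee t) = 0 := by
      have h2 : g (ee t) ≤ 0 := by
        rw [← hfg (ee t)]
        exact functional_nonpos hf (neg_of_descent cs u t ht)
      linarith [hg t]
    have hg' : ∀ x, g (rho cs (cs.simple t) x) = g x := by
      intro x
      rw [rho_simple, refl_apply, map_sub, map_smul]
      rw [hgt]
      simp
    have hfg' : ∀ x, f (rho cs (u * cs.simple t) x) = g x := by
      intro x
      rw [map_mul, Module.End.mul_apply, hfg, hg']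
    exact ih (u * cs.simple t) (by have := descent_length cs ht; omega) f g hf hg hfg'

lemma simple_inj : Function.Injective cs.simple := by
  intro i i' h
  by_contra hne
  have h2 : (refl M i) (ee i) = (refl M i') (ee i) := by
    rw [← rho_simple cs, ← rho_simple cs, h]
  rw [refl_ee_self, refl_apply] at h2
  have h3 := congrFun h2 i
  simp only [Pi.neg_apply, Pi.sub_apply, Pi.smul_apply, ee_apply, smul_eq_mul] at h3
  simp only [if_true, if_neg hne, mul_zero, sub_zero] at h3
  norm_num at h3

end Tits

end CoxRigid

namespace CoxRigid

section Invariant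

variable {B : Type*} [Fintype B] [DecidableEq B] {W : Type*} [Group W]
  {M : CoxeterMatrix B} (cs : CoxeterSystem M W)

lemma parab_invariant (S : Set B) (f : (B → ℝ) →ₗ[ℝ] ℝ) (hf : ∀ j ∈ S, f (ee j) = 0) :
    ∀ u ∈ Subgroup.closure (cs.simple '' S), ∀ x, f (rho cs u x) = f x := by
  intro u hu
  induction hu using Subgroup.closure_induction with
  | mem g hg =>
    obtain ⟨j, hj, rfl⟩ := hg
    intro x
    rw [rho_simple, refl_apply, map_sub, map_smul, hf j hj]
    simp
  | one =>
    intro x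
    rw [map_one, Module.End.one_apply]
  | mul g g' _ _ hg hg' =>
    intro x
    rw [map_mul, Module.End.mul_apply, hg, hg']
  | inv g _ hg =>
    intro x
    have h1 := hg (rho cs g⁻¹ x)
    have h2 : rho cs g (rho cs g⁻¹ x) = x := by
      rw [← Module.End.mul_apply, ← map_mul, mul_inv_cancel, map_one, Module.End.one_apply]
    rw [h2] at h1
    exact h1.symm

lemma invariant_vanish (S : Set B) (f : (B → ℝ) →ₗ[ℝ] ℝ)
    (hinv : ∀ u ∈ Subgroup.closure (cs.simple '' S), ∀ x, f (rho cs u x) = f x) :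
    ∀ j ∈ S, f (ee j) = 0 := by
  intro j hj
  have h1 := hinv (cs.simple j) (Subgroup.subset_closure ⟨j, hj, rfl⟩) (ee j)
  rw [rho_simple, refl_ee_self, map_neg] at h1
  linarith

end Invariant

end CoxRigid

open CoxRigid in
/-- A graph automorphism of an irreducible non-spherical Coxeter system that maps each
standard parabolic subgroup to a conjugate of itself fixes every simple reflection. -/
theorem stmt_19 {B W : Type*} [Group W] [Fintype B] [Infinite W]
    {M : CoxeterMatrix B} (cs : CoxeterSystem M W) (hirr : CoxIrreducible M)
    (α : W ≃* W)
    (hS : α '' (Set.range cs.simple) = Set.range cs.simple)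
    (hpar : ∀ J : Set B, ∃ w : W, ∀ x : W,
      x ∈ stdParabolic cs J ↔ w⁻¹ * α x * w ∈ stdParabolic cs J) :
    ∀ i : B, α (cs.simple i) = cs.simple i := by
  classical
  have hσex : ∀ i : B, ∃ i' : B, α (cs.simple i) = cs.simple i' := by
    intro i
    have h1 : α (cs.simple i) ∈ α '' (Set.range cs.simple) := ⟨cs.simple i, ⟨i, rfl⟩, rfl⟩
    rw [hS] at h1
    obtain ⟨i', hi'⟩ := h1
    exact ⟨i', hi'.symm⟩
  choose σ hσ using hσex
  have hσinj : Function.Injective σ := by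
    intro a b hab
    apply simple_inj cs
    apply α.injective
    rw [hσ a, hσ b, hab]
  have hσbij : Function.Bijective σ := Finite.injective_iff_bijective.mp hσinj
  intro k
  suffices hk : σ k = k by rw [hσ k, hk]
  set J : Set B := Set.univ \ {k} with hJ
  obtain ⟨w, hw⟩ := hpar J
  have himgJ : σ '' J = Set.univ \ {σ k} := by
    rw [hJ, Set.image_diff hσinj, Set.image_univ, Set.image_singleton,
      Set.range_eq_univ.mpr hσbij.2]
  have himage : (α.toMonoidHom) '' (cs.simple '' J) = cs.simple '' (Set.univ \ {σ k}) := by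
    rw [← himgJ, Set.image_image, Set.image_image]
    exact Set.image_congr (fun i _ => hσ i)
  have hPmap : Subgroup.map α.toMonoidHom (stdParabolic cs J)
      = stdParabolic cs (Set.univ \ {σ k}) := by
    unfold stdParabolic
    rw [MonoidHom.map_closure, himage]
  have hiff : ∀ y : W, y ∈ stdParabolic cs (Set.univ \ {σ k})
      ↔ w⁻¹ * y * w ∈ stdParabolic cs J := by
    intro y
    rw [← hPmap]
    constructor
    · intro hy
      have hx : α.symm y ∈ stdParabolic cs J := Subgroup.mem_map_equiv.mp hy
      have h2 := (hw (α.symm y)).mp hx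
      rwa [MulEquiv.apply_symm_apply] at h2
    · intro hy
      apply Subgroup.mem_map_equiv.mpr
      apply (hw (α.symm y)).mpr
      rwa [MulEquiv.apply_symm_apply]
  set fk : (B → ℝ) →ₗ[ℝ] ℝ := LinearMap.proj k with hfk
  have hfkee : ∀ b, fk (ee b) = if k = b then 1 else 0 := by
    intro b
    show ee b k = _
    rw [ee_apply]
  have hfkJ : ∀ u ∈ stdParabolic cs J, ∀ x, fk (rho cs u x) = fk x := by
    apply parab_invariant cs J fk
    intro j hj
    rw [hfkee]
    rw [if_neg]
    intro hc
    exact hj.2 (by rw [← hc]; rfl)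
  set h : (B → ℝ) →ₗ[ℝ] ℝ := fk.comp (rho cs w⁻¹ : Module.End ℝ (B → ℝ)) with hh
  have hinv : ∀ u ∈ stdParabolic cs (Set.univ \ {σ k}), ∀ x, h (rho cs u x) = h x := by
    intro u hu x
    have hx := (hiff u).mp hu
    have e1 : rho cs w⁻¹ (rho cs u x) = rho cs (w⁻¹ * u * w) (rho cs w⁻¹ x) := by
      rw [← Module.End.mul_apply, ← map_mul, ← Module.End.mul_apply, ← map_mul]
      congr 1
      group
    rw [hh, LinearMap.comp_apply, LinearMap.comp_apply, e1, hfkJ _ hx]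
  have hvanish : ∀ j, j ≠ σ k → h (ee j) = 0 := by
    intro j hj
    exact invariant_vanish cs (Set.univ \ {σ k}) h hinv j ⟨trivial, hj⟩
  set c : ℝ := h (ee (σ k)) with hc
  have hsum : ∀ x : B → ℝ, h x = x (σ k) * c := by
    intro x
    rw [functional_sum h x]
    rw [Finset.sum_eq_single (σ k) (fun b _ hb => by rw [hvanish b hb, mul_zero])
      (fun hmem => absurd (Finset.mem_univ (σ k)) hmem)]
  have hfk_of_h : ∀ x, fk x = h (rho cs w x) := by
    intro x
    rw [hh, LinearMap.comp_apply, rho_inv_apply]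
  have hcne : c ≠ 0 := by
    intro hc0
    have h1 : fk (ee k) = 0 := by
      rw [hfk_of_h, hsum, hc0, mul_zero]
    rw [hfkee, if_pos rfl] at h1
    norm_num at h1
  rcases lt_trichotomy c 0 with hcneg | hc0 | hcpos
  · exfalso
    have hD := coord_infinite cs hirr (σ k)
    have hsub : {x | x ∈ PosRoots cs ∧ 0 < x (σ k)} ⊆ invSet cs w⁻¹ := by
      rintro x ⟨⟨hroot, hpos⟩, hxk⟩
      refine ⟨hroot, hpos, ?_⟩
      have hroot' : IsRoot cs (rho cs w⁻¹ x) := isRoot_rho cs _ hroot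
      rcases root_dichotomy cs hroot' with hp | hn
      · exfalso
        have h1 : h x = x (σ k) * c := hsum x
        have h2 : h x = (rho cs w⁻¹ x) k := by rw [hh, LinearMap.comp_apply]; rfl
        have h3 := hp k
        have h4 := mul_neg_of_pos_of_neg hxk hcneg
        rw [h2] at h1
        linarith
      · exact hn
    exact (hD.mono hsub) (invSet_finite cs w⁻¹)
  · exact absurd hc0 hcne
  · by_contra hne
    have hg : ∀ b, (0:ℝ) ≤ (c • (LinearMap.proj (σ k) : (B → ℝ) →ₗ[ℝ] ℝ)) (ee b) := by
      intro b
      rw [LinearMap.smul_apply]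
      have : (LinearMap.proj (σ k) : (B → ℝ) →ₗ[ℝ] ℝ) (ee b) = ee b (σ k) := rfl
      rw [this, ee_apply]
      split
      · simpa using le_of_lt hcpos
      · simp
    have hf : ∀ b, (0:ℝ) ≤ fk (ee b) := by
      intro b
      rw [hfkee]
      split <;> norm_num
    have hfg : ∀ x, fk (rho cs w⁻¹ x) = (c • (LinearMap.proj (σ k) : (B → ℝ) →ₗ[ℝ] ℝ)) x := by
      intro x
      have h1 : fk (rho cs w⁻¹ x) = h x := by rw [hh, LinearMap.comp_apply]
      rw [h1, hsum, LinearMap.smul_apply]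
      have : (LinearMap.proj (σ k) : (B → ℝ) →ₗ[ℝ] ℝ) x = x (σ k) := rfl
      rw [this, smul_eq_mul]
      ring
    have htits := tits cs (cs.length w⁻¹) w⁻¹ le_rfl fk
      (c • (LinearMap.proj (σ k) : (B → ℝ) →ₗ[ℝ] ℝ)) hf hg hfg
    have heval := congrArg (fun f => f (ee (σ k))) htits
    rw [hfkee, if_neg (fun hc' => hne hc'.symm), LinearMap.smul_apply] at heval
    have h2 : (LinearMap.proj (σ k) : (B → ℝ) →ₗ[ℝ] ℝ) (ee (σ k)) = ee (σ k) (σ k) := rfl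
    rw [h2, ee_self] at heval
    simp at heval
    rw [heval] at hcpos
    norm_num at hcpos
end
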